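/- arXiv:1509.07986 — 8 statements merged into one kernel-verified Lean document; each statement's English description precedes it below -/
import Mathlib

section
/- For every fuzzy cover q ∈ Δ_N there exist fuzzy covers q̲ and q̄ in Δ_N such that (i) W(q̲) ≤ W(q) ≤ W(q̄), and (ii) every coordinate q̲_i and q̄_i is an extreme point of the simplex Δ_i (i.e., each element concentrates its whole membership on a single subset containing it). -/
open Finset

/-- Möbius inversion of a set function `w : 2^N → ℝ`:
`μ^w(A) = ∑_{B ⊆ A} (−1)^{|A∖B|} w(B)`. -/
def mobius {n : ℕ} (w : Finset (Fin n) → ℝ) (A : Finset (Fin n)) : ℝ :=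
  ∑ B ∈ A.powerset, (-1 : ℝ) ^ (A.card - B.card) * w B

/-- `qi` is a membership distribution for element `i`: nonnegative, supported on
the subsets containing `i`, and summing to `1` over them. -/
def coordDist {n : ℕ} (i : Fin n) (qi : Finset (Fin n) → ℝ) : Prop :=
  (∀ A, 0 ≤ qi A) ∧ (∀ A, i ∉ A → qi A = 0) ∧
    ∑ A ∈ Finset.univ.filter (fun A => i ∈ A), qi A = 1

/-- A fuzzy cover `q ∈ Δ_N`. -/
def fuzzyCover {n : ℕ} (q : Fin n → Finset (Fin n) → ℝ) : Prop :=
  ∀ i, coordDist i (q i)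

/-- Global worth `W(q) = ∑_{A⊆N} ∑_{B⊆A} (∏_{i∈B} q_i^A) μ^w(B)`. -/
def W {n : ℕ} (w : Finset (Fin n) → ℝ) (q : Fin n → Finset (Fin n) → ℝ) : ℝ :=
  ∑ A : Finset (Fin n), ∑ B ∈ A.powerset, (∏ i ∈ B, q i A) * mobius w B


/-- The extreme point of `Δ_i` concentrating the whole membership mass on `A`. -/
def dirac {n : ℕ} (A : Finset (Fin n)) : Finset (Fin n) → ℝ :=
  fun B => if B = A then 1 else 0

/-!
`W w q` is affine in each coordinate `q i` separately: replacing `q i` by `r` gives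
`∑ A, r A * c A + d` with `c`, `d` independent of `q i`. An affine function on the simplex
`Δ_i` is bounded below by its value at some vertex, so the coordinates can be replaced one
by one by vertices without increasing `W`. Since `W` is linear in `w`, the upper
bracket is the lower bracket for `-w`.
-/

noncomputable def worthSlope {n : ℕ} (w : Finset (Fin n) → ℝ)
    (q : Fin n → Finset (Fin n) → ℝ) (i : Fin n) (A : Finset (Fin n)) : ℝ :=
  ∑ B ∈ A.powerset with i ∈ B, (∏ j ∈ B.erase i, q j A) * mobius w B

noncomputable def worthOffset {n : ℕ} (w : Finset (Fin n) → ℝ)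
    (q : Fin n → Finset (Fin n) → ℝ) (i : Fin n) : ℝ :=
  ∑ A : Finset (Fin n), ∑ B ∈ A.powerset with i ∉ B, (∏ j ∈ B, q j A) * mobius w B

lemma W_update {n : ℕ} (w : Finset (Fin n) → ℝ) (q : Fin n → Finset (Fin n) → ℝ)
    (i : Fin n) (r : Finset (Fin n) → ℝ) :
    W w (Function.update q i r) = ∑ A, r A * worthSlope w q i A + worthOffset w q i := by
  unfold W worthSlope worthOffset
  rw [← sum_add_distrib]
  refine sum_congr rfl fun A _ => ?_
  rw [← sum_filter_add_sum_filter_not A.powerset (i ∈ ·), mul_sum]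
  congr 1
  · refine sum_congr rfl fun B hB => ?_
    have hiB := (mem_filter.1 hB).2
    rw [← mul_prod_erase B _ hiB, Function.update_self, mul_assoc]
    congr 2
    exact prod_congr rfl fun j hj =>
      congrFun (Function.update_of_ne (ne_of_mem_erase hj) _ _) A
  · refine sum_congr rfl fun B hB => ?_
    have hiB := (mem_filter.1 hB).2
    congr 1
    exact prod_congr rfl fun j hj =>
      congrFun (Function.update_of_ne (ne_of_mem_of_not_mem hj hiB) _ _) A

lemma W_update_dirac {n : ℕ} (w : Finset (Fin n) → ℝ) (q : Fin n → Finset (Fin n) → ℝ)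
    (i : Fin n) (A : Finset (Fin n)) :
    W w (Function.update q i (dirac A)) = worthSlope w q i A + worthOffset w q i := by
  simp [W_update, dirac]

lemma W_neg {n : ℕ} (w : Finset (Fin n) → ℝ) (q : Fin n → Finset (Fin n) → ℝ) :
    W (-w) q = -W w q := by
  simp [W, mobius, sum_neg_distrib]

lemma exists_le_sum_mul_of_sum_eq_one {ι : Type*} {s : Finset ι} {p c : ι → ℝ}
    (hp : ∀ a ∈ s, 0 ≤ p a) (hsum : ∑ a ∈ s, p a = 1) :
    ∃ a ∈ s, c a ≤ ∑ a ∈ s, p a * c a := by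
  have hs : s.Nonempty := nonempty_of_sum_ne_zero (hsum ▸ one_ne_zero)
  obtain ⟨a, ha, hmin⟩ := exists_min_image s c hs
  refine ⟨a, ha, ?_⟩
  calc c a = ∑ b ∈ s, p b * c a := by rw [← sum_mul, hsum, one_mul]
    _ ≤ ∑ b ∈ s, p b * c b :=
      sum_le_sum fun b hb => mul_le_mul_of_nonneg_left (hmin b hb) (hp b hb)

lemma coordDist_dirac {n : ℕ} {i : Fin n} {A : Finset (Fin n)} (hA : i ∈ A) :
    coordDist i (dirac A) := by
  refine ⟨fun B => by unfold dirac; positivity, fun B hB => if_neg ?_, ?_⟩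
  · rintro rfl
    exact hB hA
  · simp [dirac, hA]

lemma exists_dirac_update_le {n : ℕ} (w : Finset (Fin n) → ℝ)
    {q : Fin n → Finset (Fin n) → ℝ} {i : Fin n} (hq : coordDist i (q i)) :
    ∃ A, i ∈ A ∧ W w (Function.update q i (dirac A)) ≤ W w q := by
  obtain ⟨hnonneg, hsupp, hsum⟩ := hq
  obtain ⟨A, hA, hle⟩ :=
    exists_le_sum_mul_of_sum_eq_one (c := worthSlope w q i) (fun A _ => hnonneg A) hsum
  have hW : W w q = ∑ A ∈ univ with i ∈ A, q i A * worthSlope w q i A + worthOffset w q i := by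
    rw [sum_filter_of_ne fun A _ h => by_contra fun hiA => h (by rw [hsupp A hiA, zero_mul])]
    simpa using W_update w q i (q i)
  refine ⟨A, (mem_filter.1 hA).2, ?_⟩
  rw [W_update_dirac, hW]
  exact add_le_add_left hle _

lemma fuzzyCover_update_dirac {n : ℕ} {q : Fin n → Finset (Fin n) → ℝ} (hq : fuzzyCover q)
    {i : Fin n} {A : Finset (Fin n)} (hA : i ∈ A) :
    fuzzyCover (Function.update q i (dirac A)) := by
  intro j
  rcases eq_or_ne j i with rfl | hne
  · rw [Function.update_self]
    exact coordDist_dirac hA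
  · rw [Function.update_of_ne hne]
    exact hq j

lemma exists_fuzzyCover_dirac_on_le {n : ℕ} (F : (Fin n → Finset (Fin n) → ℝ) → ℝ)
    (hF : ∀ q, fuzzyCover q → ∀ i, ∃ A, i ∈ A ∧ F (Function.update q i (dirac A)) ≤ F q)
    {q : Fin n → Finset (Fin n) → ℝ} (hq : fuzzyCover q) (s : Finset (Fin n)) :
    ∃ q', fuzzyCover q' ∧ (∀ i ∈ s, ∃ A, i ∈ A ∧ q' i = dirac A) ∧ F q' ≤ F q := by
  induction s using Finset.induction_on with
  | empty => exact ⟨q, hq, by simp, le_rfl⟩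
  | insert a s ha ih =>
    obtain ⟨q', hq', hdirac, hle⟩ := ih
    obtain ⟨A, haA, hle'⟩ := hF q' hq' a
    refine ⟨Function.update q' a (dirac A), fuzzyCover_update_dirac hq' haA, ?_, hle'.trans hle⟩
    intro i hi
    rcases mem_insert.1 hi with rfl | his
    · exact ⟨A, haA, Function.update_self _ _ _⟩
    · rw [Function.update_of_ne (ne_of_mem_of_not_mem his ha)]
      exact hdirac i his

lemma exists_dirac_fuzzyCover_le {n : ℕ} (w : Finset (Fin n) → ℝ)
    {q : Fin n → Finset (Fin n) → ℝ} (hq : fuzzyCover q) :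
    ∃ q', fuzzyCover q' ∧ (∀ i, ∃ A, i ∈ A ∧ q' i = dirac A) ∧ W w q' ≤ W w q := by
  obtain ⟨q', hq', hdirac, hle⟩ := exists_fuzzyCover_dirac_on_le (W w)
    (fun q hq i => exists_dirac_update_le w (hq i)) hq univ
  exact ⟨q', hq', fun i => hdirac i (mem_univ i), hle⟩

theorem bracketing_by_extreme_covers_general {n : ℕ} (w : Finset (Fin n) → ℝ)
    (q : Fin n → Finset (Fin n) → ℝ) (hq : fuzzyCover q) :
    ∃ qlo qhi : Fin n → Finset (Fin n) → ℝ,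
      fuzzyCover qlo ∧ fuzzyCover qhi ∧
      (∀ i : Fin n, ∃ A : Finset (Fin n), i ∈ A ∧ qlo i = dirac A) ∧
      (∀ i : Fin n, ∃ A : Finset (Fin n), i ∈ A ∧ qhi i = dirac A) ∧
      W w qlo ≤ W w q ∧ W w q ≤ W w qhi := by
  obtain ⟨qlo, hlo, hlo_dirac, hlo_le⟩ := exists_dirac_fuzzyCover_le w hq
  obtain ⟨qhi, hhi, hhi_dirac, hhi_le⟩ := exists_dirac_fuzzyCover_le (-w) hq
  rw [W_neg, W_neg, neg_le_neg_iff] at hhi_le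
  exact ⟨qlo, qhi, hlo, hhi, hlo_dirac, hhi_dirac, hlo_le, hhi_le⟩

/-- every fuzzy cover `q ∈ Δ_N` is bracketed by fuzzy covers all of
whose coordinates are extreme points of the simplices `Δ_i`. -/
theorem bracketing_by_extreme_covers {n : ℕ} (w : Finset (Fin n) → ℝ) (hw : w ∅ = 0)
    (q : Fin n → Finset (Fin n) → ℝ) (hq : fuzzyCover q) :
    ∃ qlo qhi : Fin n → Finset (Fin n) → ℝ,
      fuzzyCover qlo ∧ fuzzyCover qhi ∧
      (∀ i : Fin n, ∃ A : Finset (Fin n), i ∈ A ∧ qlo i = dirac A) ∧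
      (∀ i : Fin n, ∃ A : Finset (Fin n), i ∈ A ∧ qhi i = dirac A) ∧
      W w qlo ≤ W w q ∧ W w q ≤ W w qhi :=
  bracketing_by_extreme_covers_general w q hq
end

section
/- There exists a partition P of N such that W(p) ≥ W(q) for all fuzzy covers q ∈ Δ_N, where p ∈ Δ_N is the point associated to P; moreover W(p) = ∑_{A ∈ P} w(A). In other words, the maximum of the multilinear objective W over the product of simplices Δ_N is attained at a partition of the ground set. -/
/-!
Expanding the products in `W` shows that `W(q)` is the average of `W` over the vertices
`δ_σ` of `Δ_N` (selections `σ : N → 2^N`, with `δ_σ i A = [σ i = A]`), weighted by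
`∏ᵢ qᵢ(σ i)`. For `q ∈ Δ_N` only selections with `i ∈ σ i` carry weight, and the weights sum
to `1`. At such a vertex `∏_{i ∈ B} δ_σ i A` is the indicator of `B ⊆ σ⁻¹(A)`, so Möbius
inversion gives `W(δ_σ) = ∑_A w(σ⁻¹(A))`: the worth of the partition of `N` into the fibres
of `σ`, empty fibres contributing `w ∅ = 0`. The point of a partition `P` is the vertex
`σ = P.part`, so a partition maximizing `∑_{A ∈ P} w(A)` dominates every fuzzy cover.
-/

open Finset

/-- The point of `Δ_N` associated to a partition `P` of `N`:
`p_i^A = 1` iff `A` is the block of `P` containing `i`. -/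
def partPoint {n : ℕ} (P : Finpartition (Finset.univ : Finset (Fin n))) :
    Fin n → Finset (Fin n) → ℝ :=
  fun i A => if A ∈ P.parts ∧ i ∈ A then 1 else 0

section MobiusInversion

variable {α : Type*} [DecidableEq α]

theorem sum_Icc_neg_one_pow_card_sub {C S : Finset α} (hCS : C ⊆ S) :
    ∑ B ∈ Icc C S, (-1 : ℝ) ^ (#B - #C) = if C = S then 1 else 0 := by
  have hdisj : ∀ D ∈ (S \ C).powerset, Disjoint C D := fun D hD =>
    disjoint_of_subset_right (mem_powerset.1 hD) disjoint_sdiff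
  rw [Icc_eq_image_powerset hCS, sum_image fun D hD D' hD' h => by
    rw [← union_sdiff_cancel_left (hdisj D hD), ← union_sdiff_cancel_left (hdisj D' hD'), h]]
  rw [sum_congr rfl fun D hD => by
    rw [card_union_of_disjoint (hdisj D hD), Nat.add_sub_cancel_left]]
  have := congrArg (Int.cast : ℤ → ℝ) (sum_powerset_neg_one_pow_card (x := S \ C))
  push_cast at this
  rw [this]
  refine if_congr ?_ rfl rfl
  rw [sdiff_eq_empty_iff_subset]
  exact ⟨(subset_antisymm hCS ·), (· ▸ subset_rfl)⟩

end MobiusInversion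

theorem sum_powerset_mobius {n : ℕ} (w : Finset (Fin n) → ℝ) (S : Finset (Fin n)) :
    ∑ B ∈ S.powerset, mobius w B = w S := by
  simp only [mobius]
  rw [sum_comm' (t' := S.powerset) (s' := fun C => Icc C S) fun B C => by
    simp only [mem_powerset, mem_Icc]; constructor
    · rintro ⟨hBS, hCB⟩; exact ⟨⟨hCB, hBS⟩, hCB.trans hBS⟩
    · rintro ⟨⟨hCB, hBS⟩, -⟩; exact ⟨hBS, hCB⟩]
  simp_rw [← sum_mul]
  rw [sum_congr rfl fun C hC => by rw [sum_Icc_neg_one_pow_card_sub (mem_powerset.1 hC)]]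
  simp

section Vertices

variable {n : ℕ}

def vertex (σ : Fin n → Finset (Fin n)) : Fin n → Finset (Fin n) → ℝ :=
  fun i A => if σ i = A then 1 else 0

def fiber (σ : Fin n → Finset (Fin n)) (A : Finset (Fin n)) : Finset (Fin n) :=
  {i | σ i = A}

theorem prod_vertex (σ : Fin n → Finset (Fin n)) (A B : Finset (Fin n)) :
    ∏ i ∈ B, vertex σ i A = if B ⊆ fiber σ A then 1 else 0 := by
  simp [vertex, fiber, prod_boole, subset_iff]

theorem W_vertex (w : Finset (Fin n) → ℝ) {σ : Fin n → Finset (Fin n)} (hσ : ∀ i, i ∈ σ i) :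
    W w (vertex σ) = ∑ A, w (fiber σ A) := by
  refine sum_congr rfl fun A _ => ?_
  have hA : fiber σ A ⊆ A := fun i hi => (mem_filter.1 hi).2 ▸ hσ i
  simp_rw [prod_vertex, ite_mul, one_mul, zero_mul]
  rw [← sum_filter, ← sum_powerset_mobius w]
  congr 1
  ext B
  simp only [mem_filter, mem_powerset, and_iff_right_iff_imp]
  exact fun h => h.trans hA

theorem sum_prod_mul_prod_vertex {q : Fin n → Finset (Fin n) → ℝ} (hq : ∀ i, ∑ A, q i A = 1)
    (A B : Finset (Fin n)) :
    ∑ σ : Fin n → Finset (Fin n), (∏ i, q i (σ i)) * ∏ i ∈ B, vertex σ i A = ∏ i ∈ B, q i A := by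
  set f : Fin n → Finset (Fin n) → ℝ :=
    fun i A' => q i A' * if i ∈ B then (if A' = A then 1 else 0) else 1
  have hf : ∀ σ : Fin n → Finset (Fin n),
      ∏ i, f i (σ i) = (∏ i, q i (σ i)) * ∏ i ∈ B, vertex σ i A := by
    intro σ
    rw [prod_mul_distrib, prod_ite_mem, univ_inter]
    rfl
  have hfi : ∀ i, ∑ A', f i A' = if i ∈ B then q i A else 1 := by
    intro i
    split_ifs with hi
    · simp [f, hi]
    · simp [f, hi, hq i]
  simp_rw [← hf, ← Fintype.prod_sum, hfi, prod_ite_mem, univ_inter]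

theorem W_eq_sum_prod_mul_W_vertex (w : Finset (Fin n) → ℝ) {q : Fin n → Finset (Fin n) → ℝ}
    (hq : ∀ i, ∑ A, q i A = 1) :
    W w q = ∑ σ : Fin n → Finset (Fin n), (∏ i, q i (σ i)) * W w (vertex σ) := by
  simp only [W, mul_sum]
  rw [sum_comm]
  refine sum_congr rfl fun A _ => ?_
  rw [sum_comm]
  refine sum_congr rfl fun B _ => ?_
  simp_rw [← sum_prod_mul_prod_vertex hq A B, sum_mul, mul_assoc]

theorem coordDist.sum_univ_eq_one {i : Fin n} {qi : Finset (Fin n) → ℝ} (h : coordDist i qi) :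
    ∑ A, qi A = 1 := by
  rw [← sum_filter_add_sum_filter_not univ (i ∈ ·), h.2.2,
    sum_eq_zero fun A hA => h.2.1 A (mem_filter.1 hA).2, add_zero]

theorem W_le_of_forall_vertex_le (w : Finset (Fin n) → ℝ) {q : Fin n → Finset (Fin n) → ℝ}
    (hq : fuzzyCover q) {M : ℝ} (hM : ∀ σ, (∀ i, i ∈ σ i) → W w (vertex σ) ≤ M) :
    W w q ≤ M := by
  have hsum : ∀ i, ∑ A, q i A = 1 := fun i => (hq i).sum_univ_eq_one
  have hweight : ∑ σ : Fin n → Finset (Fin n), ∏ i, q i (σ i) = 1 := by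
    rw [← Fintype.prod_sum]
    exact prod_eq_one fun i _ => hsum i
  calc W w q = ∑ σ, (∏ i, q i (σ i)) * W w (vertex σ) := W_eq_sum_prod_mul_W_vertex w hsum
    _ ≤ ∑ σ, (∏ i, q i (σ i)) * M := sum_le_sum fun σ _ => ?_
    _ = M := by rw [← sum_mul, hweight, one_mul]
  by_cases hσ : ∀ i, i ∈ σ i
  · exact mul_le_mul_of_nonneg_left (hM σ hσ) (prod_nonneg fun i _ => (hq i).1 _)
  · obtain ⟨i, hi⟩ := not_forall.1 hσ
    rw [prod_eq_zero (mem_univ i) ((hq i).2.1 _ hi), zero_mul, zero_mul]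

end Vertices

section Partitions

variable {n : ℕ}

def fiberPartition (σ : Fin n → Finset (Fin n)) : Finpartition (univ : Finset (Fin n)) :=
  letI : DecidableRel (Setoid.ker σ) := fun i j => decEq (σ i) (σ j)
  Finpartition.ofSetoid (Setoid.ker σ)

theorem fiberPartition_parts (σ : Fin n → Finset (Fin n)) :
    (fiberPartition σ).parts = (univ.image σ).image (fiber σ) := by
  rw [fiberPartition, Finpartition.ofSetoid, Finpartition.ofSetSetoid_parts, image_image]
  refine image_congr fun i _ => ?_
  ext j
  simp [fiber, eq_comm]

theorem sum_parts_fiberPartition {w : Finset (Fin n) → ℝ} (hw : w ∅ = 0)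
    (σ : Fin n → Finset (Fin n)) :
    ∑ S ∈ (fiberPartition σ).parts, w S = ∑ A, w (fiber σ A) := by
  rw [fiberPartition_parts, sum_image, sum_subset (subset_univ _)]
  · intro A _ hA
    have : fiber σ A = ∅ :=
      filter_eq_empty_iff.2 fun i _ (hi : σ i = A) => hA (hi ▸ mem_image_of_mem σ (mem_univ i))
    rw [this, hw]
  · intro A hA A' _ h
    obtain ⟨i, -, rfl⟩ := mem_image.1 hA
    have : i ∈ fiber σ A' := h ▸ mem_filter.2 ⟨mem_univ i, rfl⟩
    exact (mem_filter.1 this).2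

theorem partPoint_eq_vertex (P : Finpartition (univ : Finset (Fin n))) :
    partPoint P = vertex P.part := by
  funext i A
  refine if_congr ⟨fun h => P.part_eq_of_mem h.1 h.2, ?_⟩ rfl rfl
  rintro rfl
  exact ⟨P.part_mem.2 (mem_univ i), P.mem_part (mem_univ i)⟩

theorem fiber_part (P : Finpartition (univ : Finset (Fin n))) (A : Finset (Fin n)) :
    fiber P.part A = if A ∈ P.parts then A else ∅ := by
  ext i
  split_ifs with hA
  · simp [fiber, P.part_eq_iff_mem hA]
  · simp only [fiber, mem_filter, mem_univ, true_and, notMem_empty, iff_false]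
    rintro rfl
    exact hA (P.part_mem.2 (mem_univ i))

theorem W_partPoint {w : Finset (Fin n) → ℝ} (hw : w ∅ = 0)
    (P : Finpartition (univ : Finset (Fin n))) :
    W w (partPoint P) = ∑ A ∈ P.parts, w A := by
  rw [partPoint_eq_vertex, W_vertex w fun i => P.mem_part (mem_univ i)]
  simp_rw [fiber_part, apply_ite w, hw]
  rw [sum_ite_mem, univ_inter]

end Partitions

/-- the maximum of `W` over `Δ_N` is attained at (the point
associated to) some partition `P` of the ground set, and there
`W(p) = ∑_{A ∈ P} w(A)`. -/
theorem maximizer_partition_exists {n : ℕ} (w : Finset (Fin n) → ℝ) (hw : w ∅ = 0) :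
    ∃ P : Finpartition (Finset.univ : Finset (Fin n)),
      (∀ q : Fin n → Finset (Fin n) → ℝ, fuzzyCover q → W w q ≤ W w (partPoint P)) ∧
      W w (partPoint P) = ∑ A ∈ P.parts, w A := by
  obtain ⟨P, -, hP⟩ := exists_max_image univ
    (fun P : Finpartition (univ : Finset (Fin n)) => ∑ A ∈ P.parts, w A) univ_nonempty
  refine ⟨P, fun q hq => W_le_of_forall_vertex_le w hq fun σ hσ => ?_, W_partPoint hw P⟩
  rw [W_vertex w hσ, ← sum_parts_fiberPartition hw, W_partPoint hw]
  exact hP _ (mem_univ _)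
end

section
/- If a fuzzy cover q ∈ Δ_N is exact, then for every subset A ⊆ N the number of elements of A with strictly positive membership on A satisfies |{i ∈ A : q_i^A > 0}| ∈ {0, |A|}. Equivalently (contrapositive, which is what is proved): if there is a subset A with ∅ ⊂ {i ∈ A : q_i^A > 0} ⊂ A, then there exists a shrinking q̂ of q with W(q̂) = W(q), so q is not exact. -/
open Finset

/-- `qh` is a shrinking of `q`: there is `A` carrying positive membership mass
`∑_{i∈A} q_i^A > 0` whose mass is entirely reallocated to the proper subsets of
`A`, leaving everything else (in particular elements outside `A`, and elements
`i ∈ A` with `q_i^A = 0`) unchanged. -/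
def IsShrinking {n : ℕ} (qh q : Fin n → Finset (Fin n) → ℝ) : Prop :=
  ∃ A : Finset (Fin n),
    0 < (∑ i ∈ A, q i A) ∧
    (∀ i : Fin n, ∀ B : Finset (Fin n), ¬ B ⊆ A → qh i B = q i B) ∧
    (∀ i : Fin n, qh i A = 0) ∧
    (∀ i : Fin n, i ∉ A → ∀ B : Finset (Fin n), qh i B = q i B) ∧
    (∀ i ∈ A, q i A = 0 → ∀ B : Finset (Fin n), qh i B = q i B) ∧
    (∀ i ∈ A, ∑ B ∈ A.powerset.erase A, qh i B = q i A + ∑ B ∈ A.powerset.erase A, q i B)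

/-- A fuzzy cover `q` is exact if every shrinking of it changes the global worth. -/
def Exact {n : ℕ} (w : Finset (Fin n) → ℝ) (q : Fin n → Finset (Fin n) → ℝ) : Prop :=
  ∀ qh : Fin n → Finset (Fin n) → ℝ, fuzzyCover qh → IsShrinking qh q → W w qh ≠ W w q

open Function

/-!
`W` is affine in each row `q i`. Split the `A`-block of every row of `q` into the two extreme
rows "all its mass on `A`" and "all its mass, rescaled, on the proper subsets of `A`": this
sandwiches `W q` between the worths of two profiles whose rows are all unsplit. In such a
profile, the set `T` of elements that still put mass on `A` puts no mass on `T`, and `T ⊊ A`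
because some element of `A` has zero membership on `A`. Swapping the columns `A` and `T` then
keeps `W` and empties column `A`, i.e. gives a shrinking. The shrinkings at `A` form a convex
set on which `W` is continuous, so one of them has worth exactly `W q`.
-/

theorem exists_le_le_of_forall_insert {ι α β : Type*} [DecidableEq ι] [Preorder β]
    (P : Finset ι → α → Prop) (f : α → β)
    (step : ∀ k R x, P (insert k R) x → ∃ u v, P R u ∧ P R v ∧ f u ≤ f x ∧ f x ≤ f v)
    (R : Finset ι) {x : α} (hx : P R x) :
    ∃ u v, P ∅ u ∧ P ∅ v ∧ f u ≤ f x ∧ f x ≤ f v := by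
  induction R using Finset.induction_on generalizing x with
  | empty => exact ⟨x, x, hx, hx, le_rfl, le_rfl⟩
  | insert k R _ ih =>
    obtain ⟨u, v, hu, hv, hux, hxv⟩ := step k R x hx
    obtain ⟨u', -, hu', -, hu'u, -⟩ := ih hu
    obtain ⟨-, v', -, hv', -, hvv'⟩ := ih hv
    exact ⟨u', v', hu', hv', hu'u.trans hux, hxv.trans hvv'⟩

theorem sum_powerset_prod_mul_of_subset {α M : Type*} [DecidableEq α] [CommSemiring M]
    {s t : Finset α} (x : α → M) (g : Finset α → M) (hts : t ⊆ s)
    (hx : ∀ i ∈ s, i ∉ t → x i = 0) :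
    ∑ B ∈ s.powerset, (∏ i ∈ B, x i) * g B = ∑ B ∈ t.powerset, (∏ i ∈ B, x i) * g B := by
  refine (sum_subset (powerset_mono.2 hts) fun B hBs hBt => ?_).symm
  obtain ⟨i, hiB, hit⟩ := not_subset.1 (mt mem_powerset.2 hBt)
  rw [prod_eq_zero hiB (hx i (mem_powerset.1 hBs hiB) hit), zero_mul]

section

variable {n : ℕ}

theorem continuous_W (w : Finset (Fin n) → ℝ) : Continuous (W w) := by
  unfold W; fun_prop

theorem W_update_combo (w : Finset (Fin n) → ℝ) (r : Fin n → Finset (Fin n) → ℝ) (k : Fin n)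
    (x y : Finset (Fin n) → ℝ) {a b : ℝ} (hab : a + b = 1) :
    W w (update r k (a • x + b • y)) = a * W w (update r k x) + b * W w (update r k y) := by
  simp only [W, mul_sum, ← sum_add_distrib]
  refine sum_congr rfl fun C _ => sum_congr rfl fun B _ => ?_
  have hC (z : Finset (Fin n) → ℝ) :
      (fun i => update r k z i C) = update (fun i => r i C) k (z C) :=
    funext fun i => apply_update (fun _ f => f C) r k z i
  simp only [hC]
  by_cases hk : k ∈ B
  · simp only [prod_update_of_mem hk, Pi.add_apply, Pi.smul_apply, smul_eq_mul]; ring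
  · simp only [prod_update_of_notMem hk]
    linear_combination (-((∏ i ∈ B, r i C) * mobius w B)) * hab

/-- `ri` is obtained from the row `qi` by moving mass around inside the powerset of `A`, which is
allowed only if `qi A > 0`. -/
structure IsRowRealloc (A : Finset (Fin n)) (i : Fin n) (qi ri : Finset (Fin n) → ℝ) : Prop where
  nonneg : ∀ B, 0 ≤ ri B
  eq_zero_of_notMem : ∀ B, i ∉ B → ri B = 0
  eq_of_not_subset : ∀ B, ¬ B ⊆ A → ri B = qi B
  eq_of_eq_zero : qi A = 0 → ri = qi
  sum_powerset : ∑ B ∈ A.powerset, ri B = ∑ B ∈ A.powerset, qi B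

def IsUnsplit (A : Finset (Fin n)) (ρ : Finset (Fin n) → ℝ) : Prop :=
  ρ A = 0 ∨ ∀ B ⊂ A, ρ B = 0

def collapse (A : Finset (Fin n)) (ρ : Finset (Fin n) → ℝ) (B : Finset (Fin n)) : ℝ :=
  if B ⊆ A then (if B = A then ∑ C ∈ A.powerset, ρ C else 0) else ρ B

noncomputable def spread (A : Finset (Fin n)) (ρ : Finset (Fin n) → ℝ) (B : Finset (Fin n)) : ℝ :=
  if B ⊆ A then (if B = A then 0 else (∑ C ∈ A.powerset, ρ C) / (∑ C ∈ A.ssubsets, ρ C) * ρ B)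
  else ρ B

variable {A : Finset (Fin n)} {i : Fin n} {qi ρ : Finset (Fin n) → ℝ}

theorem isUnsplit_collapse : IsUnsplit A (collapse A ρ) :=
  Or.inr fun B hB => by simp [collapse, hB.subset, hB.ne]

theorem isUnsplit_spread : IsUnsplit A (spread A ρ) :=
  Or.inl (by simp [spread])

theorem IsRowRealloc.mem_of_ne_zero (hρ : IsRowRealloc A i qi ρ) (hA : ρ A ≠ 0) : i ∈ A :=
  by_contra fun h => hA (hρ.eq_zero_of_notMem A h)

theorem IsRowRealloc.ne_zero_of_ne_zero (hρ : IsRowRealloc A i qi ρ) (hA : ρ A ≠ 0) : qi A ≠ 0 :=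
  fun hq => hA ((congrFun (hρ.eq_of_eq_zero hq) A).trans hq)

theorem isRowRealloc_collapse (hρ : IsRowRealloc A i qi ρ) (hA : ρ A ≠ 0) :
    IsRowRealloc A i qi (collapse A ρ) := by
  refine ⟨fun B => ?_, fun B hiB => ?_, fun B hBA => ?_, fun hq => ?_, ?_⟩
  · unfold collapse
    split_ifs
    exacts [sum_nonneg fun C _ => hρ.nonneg C, le_rfl, hρ.nonneg B]
  · unfold collapse
    split_ifs with hBA hBA'
    exacts [absurd (hBA' ▸ hρ.mem_of_ne_zero hA) hiB, rfl, hρ.eq_zero_of_notMem B hiB]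
  · simp only [collapse, if_neg hBA, hρ.eq_of_not_subset B hBA]
  · exact absurd hq (hρ.ne_zero_of_ne_zero hA)
  · simp only [collapse]
    rw [← hρ.sum_powerset, sum_congr rfl fun B hB => if_pos (mem_powerset.1 hB),
      sum_ite_eq' _ _ _, if_pos (mem_powerset_self A)]

theorem isRowRealloc_spread (hρ : IsRowRealloc A i qi ρ) (hA : ρ A ≠ 0)
    (hd : 0 < ∑ C ∈ A.ssubsets, ρ C) : IsRowRealloc A i qi (spread A ρ) := by
  have hM : 0 ≤ ∑ C ∈ A.powerset, ρ C := sum_nonneg fun C _ => hρ.nonneg C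
  refine ⟨fun B => ?_, fun B hiB => ?_, fun B hBA => ?_, fun hq => ?_, ?_⟩
  · unfold spread
    split_ifs
    exacts [le_rfl, mul_nonneg (by positivity) (hρ.nonneg B), hρ.nonneg B]
  · unfold spread
    split_ifs
    exacts [rfl, by rw [hρ.eq_zero_of_notMem B hiB, mul_zero], hρ.eq_zero_of_notMem B hiB]
  · simp only [spread, if_neg hBA, hρ.eq_of_not_subset B hBA]
  · exact absurd hq (hρ.ne_zero_of_ne_zero hA)
  · simp only [spread]
    rw [← hρ.sum_powerset, sum_congr rfl fun B hB => if_pos (mem_powerset.1 hB),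
      ← add_sum_erase _ _ (mem_powerset_self A), if_pos rfl, zero_add,
      sum_congr rfl fun B hB => if_neg (ne_of_mem_erase hB), ← mul_sum]
    exact div_mul_cancel₀ _ hd.ne'

theorem eq_collapse_add_spread (hd : 0 < ∑ C ∈ A.ssubsets, ρ C) (hM : 0 < ∑ C ∈ A.powerset, ρ C) :
    ρ = (ρ A / ∑ C ∈ A.powerset, ρ C) • collapse A ρ +
      ((∑ C ∈ A.ssubsets, ρ C) / ∑ C ∈ A.powerset, ρ C) • spread A ρ := by
  have hmass : ∑ C ∈ A.powerset, ρ C = ρ A + ∑ C ∈ A.ssubsets, ρ C :=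
    (add_sum_erase _ _ (mem_powerset_self A)).symm
  ext B
  simp only [Pi.add_apply, Pi.smul_apply, smul_eq_mul, collapse, spread]
  split_ifs with hBA hBA'
  · subst hBA'; field_simp; ring
  · field_simp; ring
  · rw [← add_mul, ← add_div, ← hmass, div_self hM.ne', one_mul]

namespace IsRowRealloc

theorem exists_split (hρ : IsRowRealloc A i qi ρ) (hsplit : ¬ IsUnsplit A ρ) :
    ∃ u v : Finset (Fin n) → ℝ, ∃ a b : ℝ, 0 ≤ a ∧ 0 ≤ b ∧ a + b = 1 ∧ ρ = a • u + b • v ∧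
      IsRowRealloc A i qi u ∧ IsUnsplit A u ∧ IsRowRealloc A i qi v ∧ IsUnsplit A v := by
  simp only [IsUnsplit, not_or, not_forall] at hsplit
  obtain ⟨hA, B₀, hB₀, hρB₀⟩ := hsplit
  have hc : 0 < ρ A := (hρ.nonneg A).lt_of_ne' hA
  have hd : 0 < ∑ C ∈ A.ssubsets, ρ C :=
    sum_pos' (fun B _ => hρ.nonneg B) ⟨B₀, mem_ssubsets.2 hB₀, (hρ.nonneg B₀).lt_of_ne' hρB₀⟩
  have hmass : ∑ C ∈ A.powerset, ρ C = ρ A + ∑ C ∈ A.ssubsets, ρ C :=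
    (add_sum_erase _ _ (mem_powerset_self A)).symm
  have hM : 0 < ∑ C ∈ A.powerset, ρ C := hmass ▸ add_pos hc hd
  exact ⟨_, _, _, _, by positivity, by positivity, by rw [← add_div, ← hmass, div_self hM.ne'],
    eq_collapse_add_spread hd hM, isRowRealloc_collapse hρ hA, isUnsplit_collapse,
    isRowRealloc_spread hρ hA hd, isUnsplit_spread⟩

theorem comp_swap (hρ : IsRowRealloc A i qi ρ) {T : Finset (Fin n)} (hTA : T ⊆ A) (hT : ρ T = 0)
    (hA : i ∉ T → ρ A = 0) : IsRowRealloc A i qi (ρ ∘ Equiv.swap A T) := by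
  refine ⟨fun B => hρ.nonneg _, fun B hiB => ?_, fun B hBA => ?_, fun hq => ?_, ?_⟩
  · rcases eq_or_ne B A with rfl | hBA
    · rwa [comp_apply, Equiv.swap_apply_left]
    rcases eq_or_ne B T with rfl | hBT
    · rw [comp_apply, Equiv.swap_apply_right]; exact hA hiB
    · rw [comp_apply, Equiv.swap_apply_of_ne_of_ne hBA hBT, hρ.eq_zero_of_notMem B hiB]
  · have hBT : B ≠ T := fun h => hBA (h ▸ hTA)
    rw [comp_apply, Equiv.swap_apply_of_ne_of_ne (fun h => hBA h.le) hBT, hρ.eq_of_not_subset B hBA]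
  · have hρA : ρ A = ρ T := by rw [hT, ← hq, hρ.eq_of_eq_zero hq]
    rw [Equiv.comp_swap_eq_update, hρA, update_eq_self, ← hρA, update_eq_self, hρ.eq_of_eq_zero hq]
  · rw [← hρ.sum_powerset]
    refine Equiv.Perm.sum_comp _ _ _ fun B hB => ?_
    obtain ⟨-, rfl | rfl⟩ := Equiv.swap_apply_ne_self_iff.1 hB
    exacts [mem_powerset_self B, mem_powerset.2 hTA]

theorem combo {ρ' : Finset (Fin n) → ℝ} (hρ : IsRowRealloc A i qi ρ) (hρ' : IsRowRealloc A i qi ρ')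
    {a b : ℝ} (ha : 0 ≤ a) (hb : 0 ≤ b) (hab : a + b = 1) :
    IsRowRealloc A i qi (a • ρ + b • ρ') := by
  refine ⟨fun B => ?_, fun B hiB => ?_, fun B hBA => ?_, fun hq => ?_, ?_⟩
  · simpa using add_nonneg (mul_nonneg ha (hρ.nonneg B)) (mul_nonneg hb (hρ'.nonneg B))
  · simp [hρ.eq_zero_of_notMem B hiB, hρ'.eq_zero_of_notMem B hiB]
  · simp [hρ.eq_of_not_subset B hBA, hρ'.eq_of_not_subset B hBA, ← add_mul, hab]
  · rw [hρ.eq_of_eq_zero hq, hρ'.eq_of_eq_zero hq, ← add_smul, hab, one_smul]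
  · simp [sum_add_distrib, ← mul_sum, hρ.sum_powerset, hρ'.sum_powerset, ← add_mul, hab]

theorem sum_eq (hρ : IsRowRealloc A i qi ρ) : ∑ B, ρ B = ∑ B, qi B := by
  rw [← sum_add_sum_compl A.powerset, ← sum_add_sum_compl A.powerset qi, hρ.sum_powerset]
  congr 1
  exact sum_congr rfl fun B hB => hρ.eq_of_not_subset B (by simpa using hB)

end IsRowRealloc

def IsRealloc (q : Fin n → Finset (Fin n) → ℝ) (A : Finset (Fin n))
    (r : Fin n → Finset (Fin n) → ℝ) : Prop :=
  ∀ i, IsRowRealloc A i (q i) (r i)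

def shrinkingsAt (q : Fin n → Finset (Fin n) → ℝ) (A : Finset (Fin n)) :
    Set (Fin n → Finset (Fin n) → ℝ) :=
  {p | IsRealloc q A p ∧ ∀ i, p i A = 0}

variable {q r : Fin n → Finset (Fin n) → ℝ} {A : Finset (Fin n)}

theorem isRealloc_self (hq : fuzzyCover q) : IsRealloc q A q :=
  fun i => ⟨(hq i).1, (hq i).2.1, fun _ _ => rfl, fun _ => rfl, rfl⟩

theorem IsRealloc.exists_le_le_of_unsplit_insert (w : Finset (Fin n) → ℝ) (hr : IsRealloc q A r)
    {k : Fin n} {R : Finset (Fin n)} (hR : ∀ i ∉ insert k R, IsUnsplit A (r i)) :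
    ∃ u v, (IsRealloc q A u ∧ ∀ i ∉ R, IsUnsplit A (u i)) ∧
      (IsRealloc q A v ∧ ∀ i ∉ R, IsUnsplit A (v i)) ∧ W w u ≤ W w r ∧ W w r ≤ W w v := by
  by_cases hk : IsUnsplit A (r k)
  · have hR' : ∀ i ∉ R, IsUnsplit A (r i) := fun i hi => by
      rcases eq_or_ne i k with rfl | hik
      exacts [hk, hR i (by simp [hik, hi])]
    exact ⟨r, r, ⟨hr, hR'⟩, ⟨hr, hR'⟩, le_rfl, le_rfl⟩
  obtain ⟨u, v, a, b, ha, hb, hab, hrk, hu, hu', hv, hv'⟩ := (hr k).exists_split hk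
  have hW : W w r = a * W w (update r k u) + b * W w (update r k v) := by
    rw [← W_update_combo w r k u v hab, ← hrk, update_eq_self]
  have hupdate {ρ} (hρ : IsRowRealloc A k (q k) ρ) (hρ' : IsUnsplit A ρ) :
      IsRealloc q A (update r k ρ) ∧ ∀ i ∉ R, IsUnsplit A (update r k ρ i) := by
    refine ⟨fun i => ?_, fun i hi => ?_⟩ <;> rcases eq_or_ne i k with rfl | hik
    · simpa using hρ
    · simpa [hik] using hr i
    · simpa using hρ'
    · simpa [hik] using hR i (by simp [hik, hi])
  have hmin := Convex.min_le_combo (W w (update r k u)) (W w (update r k v)) ha hb hab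
  have hmax := Convex.combo_le_max (W w (update r k u)) (W w (update r k v)) ha hb hab
  simp only [smul_eq_mul, ← hW] at hmin hmax
  rcases le_total (W w (update r k u)) (W w (update r k v)) with h | h
  · exact ⟨_, _, hupdate hu hu', hupdate hv hv', by simpa [h] using hmin, by simpa [h] using hmax⟩
  · exact ⟨_, _, hupdate hv hv', hupdate hu hu', by simpa [h] using hmin, by simpa [h] using hmax⟩

theorem W_comp_swap (w : Finset (Fin n) → ℝ) (r : Fin n → Finset (Fin n) → ℝ) {T : Finset (Fin n)}
    (hTA : T ⊆ A) (hT : ∀ i ∉ T, r i T = 0) (hA : ∀ i ∉ T, r i A = 0) :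
    W w (fun i => r i ∘ Equiv.swap A T) = W w r := by
  refine Fintype.sum_equiv (Equiv.swap A T) _ _ fun C => ?_
  simp only [comp_apply]
  rcases eq_or_ne C A with rfl | hCA
  · rw [Equiv.swap_apply_left]
    exact sum_powerset_prod_mul_of_subset _ _ hTA fun i _ hi => hT i hi
  rcases eq_or_ne C T with rfl | hCT
  · rw [Equiv.swap_apply_right]
    exact (sum_powerset_prod_mul_of_subset _ _ hTA fun i _ hi => hA i hi).symm
  · rw [Equiv.swap_apply_of_ne_of_ne hCA hCT]

theorem IsRealloc.exists_mem_shrinkingsAt_W_eq (w : Finset (Fin n) → ℝ) (hr : IsRealloc q A r)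
    (hunsplit : ∀ i, IsUnsplit A (r i)) {j : Fin n} (hjA : j ∈ A) (hj : q j A = 0) :
    ∃ p ∈ shrinkingsAt q A, W w p = W w r := by
  set T := univ.filter fun i => r i A ≠ 0
  have hA : ∀ i ∉ T, r i A = 0 := by simp [T]
  have hTA : T ⊆ A := fun i hi => (hr i).mem_of_ne_zero (mem_filter.1 hi).2
  have hTA' : T ⊂ A := (ssubset_iff_of_subset hTA).2
    ⟨j, hjA, fun h => (hr j).ne_zero_of_ne_zero (mem_filter.1 h).2 hj⟩
  have hT (i : Fin n) : r i T = 0 := by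
    by_cases hi : i ∈ T
    exacts [(hunsplit i).resolve_left (mem_filter.1 hi).2 T hTA', (hr i).eq_zero_of_notMem T hi]
  refine ⟨fun i => r i ∘ Equiv.swap A T, ⟨fun i => (hr i).comp_swap hTA (hT i) (hA i), fun i => ?_⟩,
    W_comp_swap w r hTA (fun i _ => hT i) hA⟩
  simp [hT]

theorem exists_mem_shrinkingsAt_W_le_le (w : Finset (Fin n) → ℝ) (hq : fuzzyCover q) {j : Fin n}
    (hjA : j ∈ A) (hj : q j A = 0) :
    ∃ p ∈ shrinkingsAt q A, ∃ p' ∈ shrinkingsAt q A, W w p ≤ W w q ∧ W w q ≤ W w p' := by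
  obtain ⟨u, v, ⟨hu, hu'⟩, ⟨hv, hv'⟩, hle, hle'⟩ :=
    exists_le_le_of_forall_insert (fun R r => IsRealloc q A r ∧ ∀ i ∉ R, IsUnsplit A (r i)) (W w)
      (fun _ _ _ hr => hr.1.exists_le_le_of_unsplit_insert w hr.2) univ
      ⟨isRealloc_self hq, by simp⟩
  obtain ⟨p, hp, hpu⟩ :=
    hu.exists_mem_shrinkingsAt_W_eq w (fun i => hu' i (notMem_empty i)) hjA hj
  obtain ⟨p', hp', hpv⟩ :=
    hv.exists_mem_shrinkingsAt_W_eq w (fun i => hv' i (notMem_empty i)) hjA hj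
  exact ⟨p, hp, p', hp', hpu ▸ hle, hpv ▸ hle'⟩

theorem convex_shrinkingsAt : Convex ℝ (shrinkingsAt q A) :=
  fun _ hp _ hp' _ _ ha hb hab =>
    ⟨fun i => ((hp.1 i).combo (hp'.1 i) ha hb hab), fun i => by simp [hp.2 i, hp'.2 i]⟩

theorem IsRealloc.fuzzyCover (hq : fuzzyCover q) (hr : IsRealloc q A r) : fuzzyCover r := by
  refine fun i => ⟨(hr i).nonneg, (hr i).eq_zero_of_notMem, ?_⟩
  rw [sum_filter_of_ne fun B _ h => by_contra fun hiB => h ((hr i).eq_zero_of_notMem B hiB),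
    (hr i).sum_eq, ← sum_filter_of_ne fun B _ h => by_contra fun hiB => h ((hq i).2.1 B hiB)]
  exact (hq i).2.2

theorem isShrinking_of_mem_shrinkingsAt (hq : fuzzyCover q) (hmass : 0 < ∑ i ∈ A, q i A)
    {p : Fin n → Finset (Fin n) → ℝ} (hp : p ∈ shrinkingsAt q A) : IsShrinking p q := by
  refine ⟨A, hmass, fun i B hB => (hp.1 i).eq_of_not_subset B hB, hp.2,
    fun i hi B => by rw [(hp.1 i).eq_of_eq_zero ((hq i).2.1 A hi)],
    fun i _ h B => by rw [(hp.1 i).eq_of_eq_zero h], fun i _ => ?_⟩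
  have h := (hp.1 i).sum_powerset
  rwa [← add_sum_erase _ _ (mem_powerset_self A), ← add_sum_erase _ _ (mem_powerset_self A),
    hp.2 i, zero_add] at h

end

theorem exact_support_all_or_nothing_general {n : ℕ} (w : Finset (Fin n) → ℝ)
    (q : Fin n → Finset (Fin n) → ℝ) (hq : fuzzyCover q) (hex : Exact w q) :
    ∀ A : Finset (Fin n),
      (A.filter (fun i => 0 < q i A)).card = 0 ∨
      (A.filter (fun i => 0 < q i A)).card = A.card := by
  intro A
  by_contra! h
  obtain ⟨i, hi⟩ := card_ne_zero.1 h.1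
  have hmass : 0 < ∑ i ∈ A, q i A :=
    sum_pos' (fun i _ => (hq i).1 A) ⟨i, (mem_filter.1 hi).1, (mem_filter.1 hi).2⟩
  obtain ⟨j, hjA, hj⟩ := not_forall₂.1 (mt card_filter_eq_iff.2 h.2)
  have hj0 : q j A = 0 := le_antisymm (not_lt.1 hj) ((hq j).1 A)
  obtain ⟨p, hp, p', hp', hle, hle'⟩ := exists_mem_shrinkingsAt_W_le_le w hq hjA hj0
  obtain ⟨qh, hqh, hW⟩ := convex_shrinkingsAt.isPreconnected.intermediate_value hp hp'
    (continuous_W w).continuousOn ⟨hle, hle'⟩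
  exact hex qh (hqh.1.fuzzyCover hq) (isShrinking_of_mem_shrinkingsAt hq hmass hqh) hW

/-- if a fuzzy cover `q` is exact, then for every `A ⊆ N` the number
of elements of `A` with strictly positive membership on `A` is `0` or `|A|`. -/
theorem exact_support_all_or_nothing {n : ℕ} (w : Finset (Fin n) → ℝ) (hw : w ∅ = 0)
    (q : Fin n → Finset (Fin n) → ℝ) (hq : fuzzyCover q) (hex : Exact w q) :
    ∀ A : Finset (Fin n),
      (A.filter (fun i => 0 < q i A)).card = 0 ∨
      (A.filter (fun i => 0 < q i A)).card = A.card :=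
  exact_support_all_or_nothing_general w q hq hex
end

section
/- Let P be a partition of N with associated p ∈ Δ_N, let A ∈ P with |A| > 1, let i ∈ A, and let q_i ∈ Δ_i be any membership distribution for i. Then W(p) − W(q_i | p_{−i}) = (1 − q_i^A) · ∑_{B ⊆ A, i ∈ B, |B| > 1} μ^w(B). -/
open Finset

/-- for a partition `P` with associated `p`, a block `A ∈ P` with
`|A| > 1`, `i ∈ A`, and any membership distribution `q_i ∈ Δ_i`,
`W(p) − W(q_i | p_{−i}) = (1 − q_i^A) · ∑_{B ⊆ A, i ∈ B, |B| > 1} μ^w(B)`. -/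
theorem deviation_from_partition {n : ℕ} (w : Finset (Fin n) → ℝ) (hw : w ∅ = 0)
    (P : Finpartition (Finset.univ : Finset (Fin n))) (A : Finset (Fin n))
    (hA : A ∈ P.parts) (hcard : 1 < A.card) (i : Fin n) (hi : i ∈ A)
    (qi : Finset (Fin n) → ℝ) (hqi : coordDist i qi) :
    W w (partPoint P) - W w (Function.update (partPoint P) i qi) =
      (1 - qi A) *
        ∑ B ∈ A.powerset.filter (fun B => i ∈ B ∧ 1 < B.card), mobius w B := by
  classical
  set p := partPoint P with hp
  set q := Function.update (partPoint P) i qi with hq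
  have hqjeq : ∀ j, j ≠ i → ∀ C, q j C = p j C := by
    intro j hj C
    simp [hq, hp, Function.update_of_ne hj]
  have hqii : ∀ C, q i C = qi C := by
    intro C; simp [hq]
  have hpdef : ∀ j (C : Finset (Fin n)),
      p j C = if C ∈ P.parts ∧ j ∈ C then 1 else 0 := fun _ _ => rfl
  have huniq : ∀ C ∈ P.parts, i ∈ C → C = A := fun C hC hiC =>
    P.eq_of_mem_parts hC hA hiC hi
  have hprodp : ∀ B C : Finset (Fin n), B.Nonempty → B ⊆ C →
      (∏ j ∈ B, p j C) = if C ∈ P.parts then 1 else 0 := by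
    intro B C hB hBC
    by_cases hC : C ∈ P.parts
    · simp only [hC, if_true]
      exact Finset.prod_eq_one fun j hj => by
        rw [hpdef]; simp [hC, hBC hj]
    · simp only [hC, if_false]
      exact Finset.prod_eq_zero hB.choose_spec (by rw [hpdef]; simp [hC])
  have hprodq : ∀ B C : Finset (Fin n), i ∈ B →
      (∏ j ∈ B, q j C) = qi C * ∏ j ∈ B.erase i, p j C := by
    intro B C hiB
    rw [← Finset.mul_prod_erase B _ hiB, hqii]
    exact congrArg _ (Finset.prod_congr rfl fun j hj =>
      hqjeq j (Finset.ne_of_mem_erase hj) C)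
  -- Step 1: the difference is a double sum over pairs with i ∈ B
  have h1 : W w p - W w q
      = ∑ C : Finset (Fin n), ∑ B ∈ C.powerset.filter (fun B => i ∈ B),
          ((∏ j ∈ B, p j C) - (∏ j ∈ B, q j C)) * mobius w B := by
    unfold W
    rw [← Finset.sum_sub_distrib]
    refine Finset.sum_congr rfl fun C _ => ?_
    rw [← Finset.sum_sub_distrib]
    rw [Finset.sum_filter_of_ne]
    · exact Finset.sum_congr rfl fun B _ => by ring
    · intro B hB hne
      by_contra hiB
      apply hne
      have : (∏ j ∈ B, p j C) = (∏ j ∈ B, q j C) :=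
        Finset.prod_congr rfl fun j hj => (hqjeq j (fun h => hiB (h ▸ hj)) C).symm
      rw [this]; ring
  -- Step 2: swap the sums
  have h2 : (∑ C : Finset (Fin n), ∑ B ∈ C.powerset.filter (fun B => i ∈ B),
          ((∏ j ∈ B, p j C) - (∏ j ∈ B, q j C)) * mobius w B)
      = ∑ B ∈ Finset.univ.filter (fun B => i ∈ B),
          ∑ C ∈ Finset.univ.filter (fun C => B ⊆ C),
          ((∏ j ∈ B, p j C) - (∏ j ∈ B, q j C)) * mobius w B := by
    refine Finset.sum_comm' ?_
    intro C B
    simp only [Finset.mem_filter, Finset.mem_powerset, Finset.mem_univ, true_and]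
  -- Step 3: evaluate the inner sum for each B containing i
  have h3 : ∀ B : Finset (Fin n), i ∈ B →
      (∑ C ∈ Finset.univ.filter (fun C => B ⊆ C),
          ((∏ j ∈ B, p j C) - (∏ j ∈ B, q j C)) * mobius w B)
      = if 1 < B.card ∧ B ⊆ A then (1 - qi A) * mobius w B else 0 := by
    intro B hiB
    by_cases hBc : 1 < B.card
    · -- B has at least two elements
      have herase : (B.erase i).Nonempty := by
        rw [← Finset.card_pos, Finset.card_erase_of_mem hiB]; omega
      have hterm : ∀ C ∈ Finset.univ.filter (fun C => B ⊆ C),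
          ((∏ j ∈ B, p j C) - (∏ j ∈ B, q j C)) * mobius w B
          = if C ∈ P.parts then (1 - qi C) * mobius w B else 0 := by
        intro C hC
        have hBC : B ⊆ C := (Finset.mem_filter.mp hC).2
        rw [hprodp B C ⟨i, hiB⟩ hBC, hprodq B C hiB,
          hprodp (B.erase i) C herase ((Finset.erase_subset i B).trans hBC)]
        by_cases hCp : C ∈ P.parts
        · simp only [hCp, if_true]; ring
        · simp [hCp]
      rw [Finset.sum_congr rfl hterm, ← Finset.sum_filter]
      by_cases hBA : B ⊆ A
      · have hset : (Finset.univ.filter (fun C => B ⊆ C)).filter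
            (fun C => C ∈ P.parts) = {A} := by
          ext C
          simp only [Finset.mem_filter, Finset.mem_univ, true_and,
            Finset.mem_singleton]
          constructor
          · rintro ⟨hBC, hC⟩; exact huniq C hC (hBC hiB)
          · rintro rfl; exact ⟨hBA, hA⟩
        rw [hset]
        simp [hBc, hBA]
      · have hset : (Finset.univ.filter (fun C => B ⊆ C)).filter
            (fun C => C ∈ P.parts) = ∅ := by
          ext C
          simp only [Finset.mem_filter, Finset.mem_univ, true_and,
            Finset.notMem_empty, iff_false, not_and]
          intro hBC hC
          exact hBA ((huniq C hC (hBC hiB)) ▸ hBC)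
        rw [hset]
        simp [hBA]
    · -- B = {i}
      have hc1 : B.card = 1 :=
        le_antisymm (not_lt.mp hBc) (Finset.card_pos.mpr ⟨i, hiB⟩)
      have hB1 : B = {i} := by
        apply Finset.eq_singleton_iff_unique_mem.mpr
        exact ⟨hiB, fun x hx => Finset.card_le_one.mp hc1.le x hx i hiB⟩
      subst hB1
      have hfilt : Finset.univ.filter (fun C : Finset (Fin n) => {i} ⊆ C)
          = Finset.univ.filter (fun C => i ∈ C) := by
        apply Finset.filter_congr
        intro C _
        simp [Finset.singleton_subset_iff]
      have hsump : (∑ C ∈ Finset.univ.filter (fun C : Finset (Fin n) => i ∈ C),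
          ∏ j ∈ ({i} : Finset (Fin n)), p j C) = 1 := by
        have : ∀ C ∈ Finset.univ.filter (fun C : Finset (Fin n) => i ∈ C),
            (∏ j ∈ ({i} : Finset (Fin n)), p j C)
            = if C ∈ P.parts then 1 else 0 := by
          intro C hC
          exact hprodp _ C ⟨i, Finset.mem_singleton_self i⟩
            (Finset.singleton_subset_iff.mpr (Finset.mem_filter.mp hC).2)
        rw [Finset.sum_congr rfl this, ← Finset.sum_filter]
        have hset : (Finset.univ.filter (fun C : Finset (Fin n) => i ∈ C)).filter
            (fun C => C ∈ P.parts) = {A} := by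
          ext C
          simp only [Finset.mem_filter, Finset.mem_univ, true_and,
            Finset.mem_singleton]
          constructor
          · rintro ⟨hiC, hC⟩; exact huniq C hC hiC
          · rintro rfl; exact ⟨hi, hA⟩
        rw [hset]
        simp
      have hsumq : (∑ C ∈ Finset.univ.filter (fun C : Finset (Fin n) => i ∈ C),
          ∏ j ∈ ({i} : Finset (Fin n)), q j C) = 1 := by
        have : ∀ C : Finset (Fin n),
            (∏ j ∈ ({i} : Finset (Fin n)), q j C) = qi C := by
          intro C; simp [hqii]
        rw [Finset.sum_congr rfl fun C _ => this C]
        exact hqi.2.2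
      rw [hfilt, if_neg (by simp), ← Finset.sum_mul, Finset.sum_sub_distrib,
        hsump, hsumq]
      ring
  rw [h1, h2, Finset.sum_congr rfl fun B hB => h3 B (Finset.mem_filter.mp hB).2,
    ← Finset.sum_filter, Finset.filter_filter]
  have hset : Finset.univ.filter (fun B : Finset (Fin n) =>
        i ∈ B ∧ 1 < B.card ∧ B ⊆ A)
      = A.powerset.filter (fun B => i ∈ B ∧ 1 < B.card) := by
    ext B
    simp only [Finset.mem_filter, Finset.mem_univ, true_and, Finset.mem_powerset]
    tauto
  rw [hset, Finset.mul_sum]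
end

section
/- In the lower-dimensional (feasible-family) setting, the values taken on exact fuzzy covers do not saturate the range of W. Concretely: there exist a ground set N, a feasible family F ⊆ 2^N containing ∅ and all singletons, a weight function w : F → ℝ₊ with w(∅) = 0, and a fuzzy cover q ∈ Δ̄_N such that W(q) > ∑_{A ∈ P} w(A) for every partition P of N all of whose blocks belong to F. (The paper's witness: N = {1,2,3,4}, F ⊇ {N, {4}, {1,2}, {1,3}, {2,3}}, w(N) = 3, w({4}) = 2, w({i,j}) = 1 for 1 ≤ i < j ≤ 3, singletons of weight 0, and q with q_4^{{4}} = 1 and q_i^N = 1 for i = 1,2,3, which gives W(q) = 5.) -/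
open Finset

/-- Möbius inversion on the poset of feasible subsets `F`, defined recursively by
`μ^w(A) = w(A) − ∑_{B ∈ F, B ⊂ A} μ^w(B)` (strict inclusion). -/
def mobiusF {n : ℕ} (F : Finset (Finset (Fin n))) (w : Finset (Fin n) → ℝ)
    (A : Finset (Fin n)) : ℝ :=
  w A - ∑ B ∈ (F.filter (fun B => B ⊂ A)).attach, mobiusF F w B.1
termination_by A.card
decreasing_by
  exact Finset.card_lt_card (Finset.mem_filter.mp B.2).2

/-- `qi` is a membership distribution for element `i` over the feasible subsets
containing `i`: nonnegative, supported on `F_i = {A ∈ F : i ∈ A}`, summing to `1`. -/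
def coordDistF {n : ℕ} (F : Finset (Finset (Fin n))) (i : Fin n)
    (qi : Finset (Fin n) → ℝ) : Prop :=
  (∀ A, 0 ≤ qi A) ∧ (∀ A, i ∉ A ∨ A ∉ F → qi A = 0) ∧
    ∑ A ∈ F.filter (fun A => i ∈ A), qi A = 1

/-- A fuzzy cover `q ∈ Δ̄_N` in the lower-dimensional setting. -/
def fuzzyCoverF {n : ℕ} (F : Finset (Finset (Fin n)))
    (q : Fin n → Finset (Fin n) → ℝ) : Prop :=
  ∀ i, coordDistF F i (q i)

/-- Global worth `W(q) = ∑_{A ∈ F} ∑_{B ∈ F, B ⊆ A} (∏_{i∈B} q_i^A) μ^w(B)`. -/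
def WF {n : ℕ} (F : Finset (Finset (Fin n))) (w : Finset (Fin n) → ℝ)
    (q : Fin n → Finset (Fin n) → ℝ) : ℝ :=
  ∑ A ∈ F, ∑ B ∈ F.filter (fun B => B ⊆ A), (∏ i ∈ B, q i A) * mobiusF F w B

/-! ### Auxiliary construction: the paper's counterexample witness -/

/-- The feasible family on `Fin 4`. -/
def myF : Finset (Finset (Fin 4)) := {∅, {0}, {1}, {2}, {3}, {0,1}, {0,2}, {1,2}, Finset.univ}

/-- Natural-number weights. -/
def wn : Finset (Fin 4) → ℕ := fun A =>
  if A = Finset.univ then 3 else if A = {3} then 2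
  else if A = {0,1} ∨ A = {0,2} ∨ A = {1,2} then 1 else 0

/-- Real weights. -/
def myw : Finset (Fin 4) → ℝ := fun A => (wn A : ℝ)

/-- The witness fuzzy cover. -/
def myq : Fin 4 → Finset (Fin 4) → ℝ := fun i A =>
  if (i ≠ 3 ∧ A = Finset.univ) ∨ (i = 3 ∧ A = ({3} : Finset (Fin 4))) then 1 else 0

lemma mob_eq (A : Finset (Fin 4)) :
    mobiusF myF myw A = myw A - ∑ B ∈ myF.filter (fun B => B ⊂ A), mobiusF myF myw B := by
  rw [mobiusF, Finset.sum_attach]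

lemma mob_empty : mobiusF myF myw ∅ = 0 := by
  rw [mob_eq, show myF.filter (fun B => B ⊂ ∅) = ∅ from by decide]
  simp (config := { decide := true }) [myw, wn]

lemma mob_single (i : Fin 4) : mobiusF myF myw {i} = myw {i} := by
  rw [mob_eq, show myF.filter (fun B => B ⊂ {i}) = {∅} from by fin_cases i <;> decide]
  simp [mob_empty]

lemma mob_pair :
    mobiusF myF myw {0,1} = 1 ∧ mobiusF myF myw {0,2} = 1 ∧ mobiusF myF myw {1,2} = 1 := by
  refine ⟨?_, ?_, ?_⟩ <;>
  · rw [mob_eq]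
    first
    | rw [show myF.filter (fun B => B ⊂ ({0,1}:Finset (Fin 4))) = {∅, {0}, {1}} from by decide]
    | rw [show myF.filter (fun B => B ⊂ ({0,2}:Finset (Fin 4))) = {∅, {0}, {2}} from by decide]
    | rw [show myF.filter (fun B => B ⊂ ({1,2}:Finset (Fin 4))) = {∅, {1}, {2}} from by decide]
    rw [Finset.sum_insert (by decide), Finset.sum_insert (by decide), Finset.sum_singleton]
    simp (config := { decide := true }) [mob_empty, mob_single, myw, wn]

lemma mob_univ : mobiusF myF myw Finset.univ = -2 := by
  rw [mob_eq, show myF.filter (fun B => B ⊂ (Finset.univ : Finset (Fin 4))) =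
      {∅, {0}, {1}, {2}, {3}, {0,1}, {0,2}, {1,2}} from by decide]
  rw [Finset.sum_insert (by decide), Finset.sum_insert (by decide), Finset.sum_insert (by decide),
      Finset.sum_insert (by decide), Finset.sum_insert (by decide), Finset.sum_insert (by decide),
      Finset.sum_insert (by decide), Finset.sum_singleton]
  rw [mob_empty, mob_single, mob_single, mob_single, mob_single, mob_pair.1, mob_pair.2.1, mob_pair.2.2]
  simp (config := { decide := true }) [myw, wn]
  norm_num

lemma inner_univ : ∑ B ∈ myF.filter (fun B => B ⊆ (Finset.univ : Finset (Fin 4))),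
    (∏ i ∈ B, myq i Finset.univ) * mobiusF myF myw B = 3 := by
  rw [show myF.filter (fun B => B ⊆ (Finset.univ : Finset (Fin 4))) = ({∅, {0}, {1}, {2}, {3}, {0,1}, {0,2}, {1,2}, Finset.univ} : Finset (Finset (Fin 4))) from by decide]
  rw [Finset.sum_insert (by decide), Finset.sum_insert (by decide), Finset.sum_insert (by decide),
      Finset.sum_insert (by decide), Finset.sum_insert (by decide), Finset.sum_insert (by decide),
      Finset.sum_insert (by decide), Finset.sum_insert (by decide), Finset.sum_singleton]
  rw [mob_empty, mob_single, mob_single, mob_single, mob_single, mob_pair.1, mob_pair.2.1, mob_pair.2.2, mob_univ]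
  simp (config := { decide := true }) [myq, myw, wn, Finset.prod_insert, Fin.isValue]
  norm_num

lemma inner_eval (A : Finset (Fin 4)) (hA : A ∈ myF) :
    ∑ B ∈ myF.filter (fun B => B ⊆ A), (∏ i ∈ B, myq i A) * mobiusF myF myw B =
    (if A = Finset.univ then 3 else if A = ({3} : Finset (Fin 4)) then 2 else 0) := by
  fin_cases hA
  · rw [show myF.filter (fun B => B ⊆ (∅ : Finset (Fin 4))) = {∅} from by decide,
      Finset.sum_singleton, mob_empty]
    simp (config := { decide := true })
  · rw [show myF.filter (fun B => B ⊆ ({0} : Finset (Fin 4))) = {∅, {0}} from by decide,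
      Finset.sum_insert (by decide), Finset.sum_singleton, mob_empty, mob_single]
    simp (config := { decide := true }) [myw, wn]
  · rw [show myF.filter (fun B => B ⊆ ({1} : Finset (Fin 4))) = {∅, {1}} from by decide,
      Finset.sum_insert (by decide), Finset.sum_singleton, mob_empty, mob_single]
    simp (config := { decide := true }) [myw, wn]
  · rw [show myF.filter (fun B => B ⊆ ({2} : Finset (Fin 4))) = {∅, {2}} from by decide,
      Finset.sum_insert (by decide), Finset.sum_singleton, mob_empty, mob_single]
    simp (config := { decide := true }) [myw, wn]
  · rw [show myF.filter (fun B => B ⊆ ({3} : Finset (Fin 4))) = {∅, {3}} from by decide,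
      Finset.sum_insert (by decide), Finset.sum_singleton, mob_empty, mob_single]
    simp (config := { decide := true }) [myq, myw, wn]
  · rw [show myF.filter (fun B => B ⊆ ({0,1} : Finset (Fin 4))) = {∅, {0}, {1}, {0,1}} from by decide,
      Finset.sum_insert (by decide), Finset.sum_insert (by decide), Finset.sum_insert (by decide),
      Finset.sum_singleton, mob_empty, mob_single, mob_single, mob_pair.1]
    simp (config := { decide := true }) [myq, myw, wn]
  · rw [show myF.filter (fun B => B ⊆ ({0,2} : Finset (Fin 4))) = {∅, {0}, {2}, {0,2}} from by decide,
      Finset.sum_insert (by decide), Finset.sum_insert (by decide), Finset.sum_insert (by decide),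
      Finset.sum_singleton, mob_empty, mob_single, mob_single, mob_pair.2.1]
    simp (config := { decide := true }) [myq, myw, wn]
  · rw [show myF.filter (fun B => B ⊆ ({1,2} : Finset (Fin 4))) = {∅, {1}, {2}, {1,2}} from by decide,
      Finset.sum_insert (by decide), Finset.sum_insert (by decide), Finset.sum_insert (by decide),
      Finset.sum_singleton, mob_empty, mob_single, mob_single, mob_pair.2.2]
    simp (config := { decide := true }) [myq, myw, wn]
  · rw [inner_univ]; simp

lemma WF_val : WF myF myw myq = 5 := by
  rw [WF]
  rw [Finset.sum_congr rfl (fun A hA => inner_eval A hA)]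
  rw [show myF = ({∅, {0}, {1}, {2}, {3}, {0,1}, {0,2}, {1,2}, Finset.univ} : Finset (Finset (Fin 4))) from rfl]
  rw [Finset.sum_insert (by decide), Finset.sum_insert (by decide), Finset.sum_insert (by decide),
      Finset.sum_insert (by decide), Finset.sum_insert (by decide), Finset.sum_insert (by decide),
      Finset.sum_insert (by decide), Finset.sum_insert (by decide), Finset.sum_singleton]
  norm_num (config := { decide := true }) []

lemma sumw_le (P : Finpartition (Finset.univ : Finset (Fin 4)))
    (hP : ∀ A ∈ P.parts, A ∈ myF) : ∑ A ∈ P.parts, wn A ≤ 3 := by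
  have hsum : ∑ A ∈ P.parts, A.card = 4 := by
    simpa using P.sum_card_parts
  have hbot : (∅ : Finset (Fin 4)) ∉ P.parts := P.bot_notMem
  by_cases hu : (Finset.univ : Finset (Fin 4)) ∈ P.parts
  · have hparts : P.parts = {Finset.univ} := by
      apply Finset.eq_singleton_iff_unique_mem.mpr
      refine ⟨hu, fun B hB => ?_⟩
      by_contra hne
      have hd : Disjoint B (Finset.univ : Finset (Fin 4)) := P.disjoint hB hu hne
      rw [Finset.disjoint_iff_inter_eq_empty, Finset.inter_univ] at hd
      exact hbot (hd ▸ hB)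
    rw [hparts, Finset.sum_singleton]
    decide
  · obtain ⟨A, hA, h3A⟩ := P.exists_mem (Finset.mem_univ (3 : Fin 4))
    have hA3 : A = {3} := by
      have hAF := hP A hA
      have hAu : A ≠ Finset.univ := fun h => hu (h ▸ hA)
      fin_cases hAF <;> first | rfl | (exfalso; revert h3A hAu; decide)
    subst hA3
    have key : ∀ B ∈ P.parts.erase {3}, wn B + 1 ≤ B.card ∧ B.card ≤ 2 := by
      intro B hB
      have hBp := Finset.mem_of_mem_erase hB
      have hB3 : B ≠ {3} := Finset.ne_of_mem_erase hB
      have hBF := hP B hBp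
      have hBu : B ≠ Finset.univ := fun h => hu (h ▸ hBp)
      have hBe : B ≠ ∅ := fun h => hbot (h ▸ hBp)
      fin_cases hBF <;> first | (exfalso; solve_by_elim) | decide
    have h1 : ∑ B ∈ P.parts.erase {3}, (wn B + 1) ≤ ∑ B ∈ P.parts.erase {3}, B.card :=
      Finset.sum_le_sum (fun B hB => (key B hB).1)
    have h2 : ∑ B ∈ P.parts.erase {3}, B.card ≤ (P.parts.erase {3}).card * 2 := by
      calc ∑ B ∈ P.parts.erase {3}, B.card ≤ ∑ _B ∈ P.parts.erase {3}, 2 :=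
            Finset.sum_le_sum (fun B hB => (key B hB).2)
        _ = (P.parts.erase {3}).card * 2 := by rw [Finset.sum_const, smul_eq_mul]
    have h3 : ({3} : Finset (Fin 4)).card + ∑ B ∈ P.parts.erase {3}, B.card = 4 := by
      rw [Finset.add_sum_erase _ _ hA]; exact hsum
    have h5 : wn {3} + ∑ B ∈ P.parts.erase {3}, wn B = ∑ A ∈ P.parts, wn A :=
      Finset.add_sum_erase _ _ hA
    rw [Finset.sum_add_distrib, Finset.sum_const, smul_eq_mul] at h1
    have hc : ({3} : Finset (Fin 4)).card = 1 := rfl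
    have hw3 : wn {3} = 2 := by decide
    omega

lemma myq_cover : fuzzyCoverF myF myq := by
  intro i
  refine ⟨fun A => ?_, fun A h => ?_, ?_⟩
  · rw [myq]; split <;> norm_num
  · rw [myq, if_neg]
    rintro (⟨hi, rfl⟩ | ⟨rfl, rfl⟩)
    · rcases h with h | h
      · exact h (Finset.mem_univ i)
      · exact h (by decide)
    · rcases h with h | h
      · exact h (by decide)
      · exact h (by decide)
  · fin_cases i
    · show ∑ A ∈ myF.filter (fun A => (0 : Fin 4) ∈ A), myq 0 A = 1
      rw [show myF.filter (fun A => (0 : Fin 4) ∈ A) = {{0}, {0,1}, {0,2}, Finset.univ} from by decide,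
        Finset.sum_insert (by decide), Finset.sum_insert (by decide), Finset.sum_insert (by decide),
        Finset.sum_singleton]
      simp (config := { decide := true }) [myq]
    · show ∑ A ∈ myF.filter (fun A => (1 : Fin 4) ∈ A), myq 1 A = 1
      rw [show myF.filter (fun A => (1 : Fin 4) ∈ A) = {{1}, {0,1}, {1,2}, Finset.univ} from by decide,
        Finset.sum_insert (by decide), Finset.sum_insert (by decide), Finset.sum_insert (by decide),
        Finset.sum_singleton]
      simp (config := { decide := true }) [myq]
    · show ∑ A ∈ myF.filter (fun A => (2 : Fin 4) ∈ A), myq 2 A = 1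
      rw [show myF.filter (fun A => (2 : Fin 4) ∈ A) = {{2}, {0,2}, {1,2}, Finset.univ} from by decide,
        Finset.sum_insert (by decide), Finset.sum_insert (by decide), Finset.sum_insert (by decide),
        Finset.sum_singleton]
      simp (config := { decide := true }) [myq]
    · show ∑ A ∈ myF.filter (fun A => (3 : Fin 4) ∈ A), myq 3 A = 1
      rw [show myF.filter (fun A => (3 : Fin 4) ∈ A) = {{3}, Finset.univ} from by decide,
        Finset.sum_insert (by decide), Finset.sum_singleton]
      simp (config := { decide := true }) [myq]

/-- the values taken on exact fuzzy covers do not saturate the range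
of `W`: there are a ground set, a feasible family `F` (containing `∅` and all
singletons), nonnegative weights with `w(∅) = 0`, and a fuzzy cover `q ∈ Δ̄_N`
whose worth strictly exceeds `∑_{A ∈ P} w(A)` for every partition `P` of `N`
all of whose blocks are feasible. -/
theorem exact_values_do_not_saturate :
    ∃ (n : ℕ) (F : Finset (Finset (Fin n))) (w : Finset (Fin n) → ℝ)
      (q : Fin n → Finset (Fin n) → ℝ),
      (∅ : Finset (Fin n)) ∈ F ∧ (∀ i : Fin n, {i} ∈ F) ∧
      (∀ A ∈ F, 0 ≤ w A) ∧ w ∅ = 0 ∧ fuzzyCoverF F q ∧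
      ∀ P : Finpartition (Finset.univ : Finset (Fin n)),
        (∀ A ∈ P.parts, A ∈ F) → (∑ A ∈ P.parts, w A) < WF F w q := by
  refine ⟨4, myF, myw, myq, by decide, by decide, fun A _ => Nat.cast_nonneg _,
    by simp (config := { decide := true }) [myw, wn], myq_cover, fun P hP => ?_⟩
  have h := sumw_le P hP
  have hle : (∑ A ∈ P.parts, myw A) ≤ 3 := by
    simp only [myw]
    rw [← Nat.cast_sum]
    exact_mod_cast h
  rw [WF_val]
  linarith
end

section
/- In the lower-dimensional setting, for every fuzzy cover q ∈ Δ̄_N and every i ∈ N, the global worth decomposes as W(q) = W_i(q_i | q_{−i}) + W_{−i}(q_{−i}), where W_i(q_i | q_{−i}) = ∑_{A ∈ F_i} q_i^A · w_{q_{−i}}(A) is linear in q_i; consequently, for every q ∈ Δ̄_N there exists q̄ ∈ Δ̄_N with every coordinate q̄_i an extreme point of Δ̄_i and W(q̄) ≥ W(q). -/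
open Finset

/-- `w_{q_{−i}}(A) = ∑_{B ∈ F_i, B ⊆ A} (∏_{j ∈ B∖{i}} q_j^A) μ^w(B)`. -/
def wqmiF {n : ℕ} (F : Finset (Finset (Fin n))) (w : Finset (Fin n) → ℝ)
    (q : Fin n → Finset (Fin n) → ℝ) (i : Fin n) (A : Finset (Fin n)) : ℝ :=
  ∑ B ∈ F.filter (fun B => i ∈ B ∧ B ⊆ A), (∏ j ∈ B.erase i, q j A) * mobiusF F w B

/-! `W` is affine in each coordinate `q_i`, with slopes `w_{q_{−i}}(A)`, `A ∈ F_i`; so moving `q_i`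
to the point mass on a maximiser of these slopes does not decrease `W`. Doing this for one
coordinate after another turns any fuzzy cover into a dominating one made of extreme points. -/

def pointMass {n : ℕ} (A : Finset (Fin n)) : Finset (Fin n) → ℝ :=
  fun B => if B = A then 1 else 0

/-- `qi` is an extreme point of `Δ̄_i`. -/
def IsPointMassF {n : ℕ} (F : Finset (Finset (Fin n))) (i : Fin n)
    (qi : Finset (Fin n) → ℝ) : Prop :=
  ∃ A ∈ F, i ∈ A ∧ qi = pointMass A

/-- `W_{−i}(q_{−i})`. -/
def restWF {n : ℕ} (F : Finset (Finset (Fin n))) (w : Finset (Fin n) → ℝ)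
    (q : Fin n → Finset (Fin n) → ℝ) (i : Fin n) : ℝ :=
  (∑ A ∈ F.filter (fun A => i ∈ A), ∑ B ∈ F.filter (fun B => B ⊆ A.erase i),
      (∏ j ∈ B, q j A) * mobiusF F w B)
    + ∑ A ∈ F.filter (fun A => i ∉ A), ∑ B ∈ F.filter (fun B => B ⊆ A),
      (∏ j ∈ B, q j A) * mobiusF F w B

theorem Finset.sum_mul_le_of_sum_eq_one {ι R : Type*} [Semiring R] [PartialOrder R]
    [IsOrderedRing R] {s : Finset ι} {p g : ι → R} {M : R}
    (hp : ∀ a ∈ s, 0 ≤ p a) (hp1 : ∑ a ∈ s, p a = 1) (hg : ∀ a ∈ s, g a ≤ M) :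
    ∑ a ∈ s, p a * g a ≤ M :=
  calc ∑ a ∈ s, p a * g a ≤ ∑ a ∈ s, p a * M :=
        Finset.sum_le_sum fun a ha => mul_le_mul_of_nonneg_left (hg a ha) (hp a ha)
    _ = M := by rw [← Finset.sum_mul, hp1, one_mul]

section

variable {n : ℕ} (F : Finset (Finset (Fin n)))

theorem coordDistF_pointMass {i : Fin n} {A : Finset (Fin n)} (hA : A ∈ F) (hiA : i ∈ A) :
    coordDistF F i (pointMass A) := by
  refine ⟨fun B => by unfold pointMass; positivity, fun B hB => ?_, ?_⟩
  · have : B ≠ A := by rintro rfl; tauto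
    simp [pointMass, this]
  · simp [pointMass, hA, hiA]

theorem IsPointMassF.coordDistF {i : Fin n} {qi : Finset (Fin n) → ℝ}
    (h : IsPointMassF F i qi) : coordDistF F i qi := by
  obtain ⟨A, hA, hiA, rfl⟩ := h
  exact coordDistF_pointMass F hA hiA

variable (w : Finset (Fin n) → ℝ)

/-- Splitting `B ⊆ A` according to whether `i ∈ B` isolates the only terms containing `q_i`. -/
theorem WF_eq_add_restWF (q : Fin n → Finset (Fin n) → ℝ) (i : Fin n) :
    WF F w q = ∑ A ∈ F.filter (fun A => i ∈ A), q i A * wqmiF F w q i A + restWF F w q i := by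
  have split : ∀ A ∈ F.filter (fun A => i ∈ A),
      ∑ B ∈ F.filter (fun B => B ⊆ A), (∏ j ∈ B, q j A) * mobiusF F w B
        = q i A * wqmiF F w q i A
          + ∑ B ∈ F.filter (fun B => B ⊆ A.erase i), (∏ j ∈ B, q j A) * mobiusF F w B := by
    intro A _
    rw [← Finset.sum_filter_add_sum_filter_not _ (fun B => i ∈ B), Finset.filter_filter,
      Finset.filter_filter, wqmiF, Finset.mul_sum]
    congr 1
    · refine Finset.sum_congr (Finset.filter_congr fun B _ => and_comm) fun B hB => ?_
      rw [← Finset.mul_prod_erase B (fun j => q j A) (Finset.mem_filter.mp hB).2.1]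
      ring
    · exact Finset.sum_congr (Finset.filter_congr fun B _ => Finset.subset_erase.symm)
        fun _ _ => rfl
  rw [WF, restWF, ← Finset.sum_filter_add_sum_filter_not F (fun A => i ∈ A),
    Finset.sum_congr rfl split, Finset.sum_add_distrib, add_assoc]

variable {F w}

theorem wqmiF_update (q : Fin n → Finset (Fin n) → ℝ) (i : Fin n)
    (f : Finset (Fin n) → ℝ) (A : Finset (Fin n)) :
    wqmiF F w (Function.update q i f) i A = wqmiF F w q i A :=
  Finset.sum_congr rfl fun B _ => congrArg (· * _) <|
    Finset.prod_congr rfl fun _ hj => by rw [Function.update_of_ne (Finset.ne_of_mem_erase hj)]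

theorem restWF_update (q : Fin n → Finset (Fin n) → ℝ) (i : Fin n)
    (f : Finset (Fin n) → ℝ) :
    restWF F w (Function.update q i f) i = restWF F w q i := by
  have prod_update {A B : Finset (Fin n)} (hiB : i ∉ B) :
      ∏ j ∈ B, Function.update q i f j A = ∏ j ∈ B, q j A :=
    Finset.prod_congr rfl fun j hj => by rw [Function.update_of_ne (by rintro rfl; exact hiB hj)]
  unfold restWF
  congr 1
  · refine Finset.sum_congr rfl fun A _ => Finset.sum_congr rfl fun B hB => ?_
    rw [prod_update fun hiB => Finset.notMem_erase i A ((Finset.mem_filter.mp hB).2 hiB)]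
  · refine Finset.sum_congr rfl fun A hA => Finset.sum_congr rfl fun B hB => ?_
    rw [prod_update fun hiB => (Finset.mem_filter.mp hA).2 ((Finset.mem_filter.mp hB).2 hiB)]

theorem exists_update_pointMass_WF_ge (hFs : ∀ i : Fin n, {i} ∈ F)
    {q : Fin n → Finset (Fin n) → ℝ} (i : Fin n) (hqi : coordDistF F i (q i)) :
    ∃ A ∈ F, i ∈ A ∧ WF F w q ≤ WF F w (Function.update q i (pointMass A)) := by
  obtain ⟨A, hA, hmax⟩ := Finset.exists_max_image (F.filter (fun A => i ∈ A)) (wqmiF F w q i)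
    ⟨{i}, Finset.mem_filter.mpr ⟨hFs i, Finset.mem_singleton_self i⟩⟩
  refine ⟨A, (Finset.mem_filter.mp hA).1, (Finset.mem_filter.mp hA).2, ?_⟩
  have linear_at_pointMass :
      ∑ B ∈ F.filter (fun B => i ∈ B), pointMass A B * wqmiF F w q i B = wqmiF F w q i A := by
    simp [pointMass, hA]
  rw [WF_eq_add_restWF F w q i, WF_eq_add_restWF F w _ i, restWF_update]
  simp only [Function.update_self, wqmiF_update, linear_at_pointMass]
  gcongr
  exact Finset.sum_mul_le_of_sum_eq_one (fun B _ => hqi.1 B) hqi.2.2 hmax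

theorem exists_fuzzyCoverF_pointMass_on_WF_ge (hFs : ∀ i : Fin n, {i} ∈ F)
    {q : Fin n → Finset (Fin n) → ℝ} (hq : fuzzyCoverF F q) (s : Finset (Fin n)) :
    ∃ qbar, fuzzyCoverF F qbar ∧ (∀ i ∈ s, IsPointMassF F i (qbar i)) ∧
      WF F w q ≤ WF F w qbar := by
  induction s using Finset.induction_on with
  | empty => exact ⟨q, hq, by simp, le_rfl⟩
  | @insert i s his ih =>
    obtain ⟨qbar, hqbar, hpm, hle⟩ := ih
    obtain ⟨A, hA, hiA, hle'⟩ := exists_update_pointMass_WF_ge hFs i (hqbar i)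
    have hpm' : ∀ j ∈ insert i s, IsPointMassF F j (Function.update qbar i (pointMass A) j) := by
      intro j hj
      rcases Finset.mem_insert.mp hj with rfl | hjs
      · exact ⟨A, hA, hiA, Function.update_self ..⟩
      · rw [Function.update_of_ne (by rintro rfl; exact his hjs)]
        exact hpm j hjs
    refine ⟨_, fun j => ?_, hpm', hle.trans hle'⟩
    by_cases hj : j = i
    · exact (hpm' j (hj ▸ Finset.mem_insert_self i s)).coordDistF F
    · rw [Function.update_of_ne hj]
      exact hqbar j

end

theorem worth_decomposition_F_general {n : ℕ} (F : Finset (Finset (Fin n)))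
    (hFs : ∀ i : Fin n, {i} ∈ F)
    (w : Finset (Fin n) → ℝ) :
    (∀ q : Fin n → Finset (Fin n) → ℝ, fuzzyCoverF F q → ∀ i : Fin n,
      WF F w q =
        (∑ A ∈ F.filter (fun A => i ∈ A), q i A * wqmiF F w q i A)
        + ((∑ A ∈ F.filter (fun A => i ∈ A),
              ∑ B ∈ F.filter (fun B => B ⊆ A.erase i),
                (∏ j ∈ B, q j A) * mobiusF F w B)
          + ∑ A ∈ F.filter (fun A => i ∉ A),
              ∑ B ∈ F.filter (fun B => B ⊆ A),
                (∏ j ∈ B, q j A) * mobiusF F w B)) ∧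
    (∀ q : Fin n → Finset (Fin n) → ℝ, fuzzyCoverF F q →
      ∃ qbar : Fin n → Finset (Fin n) → ℝ, fuzzyCoverF F qbar ∧
        (∀ i : Fin n, ∃ A ∈ F, i ∈ A ∧
          qbar i = fun B => if B = A then (1 : ℝ) else 0) ∧
        WF F w q ≤ WF F w qbar) := by
  refine ⟨fun q _ i => WF_eq_add_restWF F w q i, fun q hq => ?_⟩
  obtain ⟨qbar, hqbar, hpm, hle⟩ := exists_fuzzyCoverF_pointMass_on_WF_ge hFs hq Finset.univ
  exact ⟨qbar, hqbar, fun i => hpm i (Finset.mem_univ i), hle⟩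

/-- in the lower-dimensional setting the global worth decomposes as
`W(q) = W_i(q_i | q_{−i}) + W_{−i}(q_{−i})` with
`W_i(q_i | q_{−i}) = ∑_{A ∈ F_i} q_i^A · w_{q_{−i}}(A)` linear in `q_i`;
consequently every fuzzy cover is dominated by one all of whose coordinates are
extreme points of the simplices `Δ̄_i`. -/
theorem worth_decomposition_F {n : ℕ} (F : Finset (Finset (Fin n)))
    (hF0 : (∅ : Finset (Fin n)) ∈ F) (hFs : ∀ i : Fin n, {i} ∈ F)
    (w : Finset (Fin n) → ℝ) (hw0 : ∀ A ∈ F, 0 ≤ w A) (hw : w ∅ = 0) :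
    (∀ q : Fin n → Finset (Fin n) → ℝ, fuzzyCoverF F q → ∀ i : Fin n,
      WF F w q =
        (∑ A ∈ F.filter (fun A => i ∈ A), q i A * wqmiF F w q i A)
        + ((∑ A ∈ F.filter (fun A => i ∈ A),
              ∑ B ∈ F.filter (fun B => B ⊆ A.erase i),
                (∏ j ∈ B, q j A) * mobiusF F w B)
          + ∑ A ∈ F.filter (fun A => i ∉ A),
              ∑ B ∈ F.filter (fun B => B ⊆ A),
                (∏ j ∈ B, q j A) * mobiusF F w B)) ∧
    (∀ q : Fin n → Finset (Fin n) → ℝ, fuzzyCoverF F q →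
      ∃ qbar : Fin n → Finset (Fin n) → ℝ, fuzzyCoverF F qbar ∧
        (∀ i : Fin n, ∃ A ∈ F, i ∈ A ∧
          qbar i = fun B => if B = A then (1 : ℝ) else 0) ∧
        WF F w q ≤ WF F w qbar) :=
  worth_decomposition_F_general F hFs w
end

section
/- In the lower-dimensional setting, let P be a partition of N all of whose blocks belong to F, with associated p ∈ Δ̄_N, let A ∈ P with |A| > 1, let i ∈ A, and let q_i ∈ Δ̄_i. Then W(p) − W(q_i | p_{−i}) = (1 − q_i^A) · ∑_{B ∈ F_i, B ⊆ A, |B| > 1} μ^w(B) = (1 − q_i^A) · (w(A) − w({i}) − ∑_{B̂ ∈ F, B̂ ⊆ A∖{i}} μ^w(B̂)). -/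
open Finset

/-- The point of `Δ̄_N` associated to a partition `P` of `N` (all of whose blocks
are feasible): `p_i^A = 1` iff `A` is the block of `P` containing `i`. -/
def partPointF {n : ℕ} (P : Finpartition (Finset.univ : Finset (Fin n))) :
    Fin n → Finset (Fin n) → ℝ :=
  fun i A => if A ∈ P.parts ∧ i ∈ A then 1 else 0

lemma mobiusF_def {n : ℕ} (F : Finset (Finset (Fin n))) (w : Finset (Fin n) → ℝ)
    (A : Finset (Fin n)) :
    mobiusF F w A = w A - ∑ B ∈ F.filter (fun B => B ⊂ A), mobiusF F w B := by
  rw [mobiusF, Finset.sum_attach]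

lemma mobiusF_empty {n : ℕ} (F : Finset (Finset (Fin n))) (w : Finset (Fin n) → ℝ)
    (hw : w ∅ = 0) : mobiusF F w ∅ = 0 := by
  rw [mobiusF_def, hw]
  have : F.filter (fun B => B ⊂ (∅ : Finset (Fin n))) = ∅ := by
    apply Finset.filter_eq_empty_iff.mpr
    intro B _
    exact Finset.not_ssubset_empty B
  rw [this, Finset.sum_empty, sub_zero]

lemma mobiusF_singleton {n : ℕ} (F : Finset (Finset (Fin n))) (w : Finset (Fin n) → ℝ)
    (hw : w ∅ = 0) (i : Fin n) : mobiusF F w {i} = w {i} := by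
  rw [mobiusF_def]
  have : ∑ B ∈ F.filter (fun B => B ⊂ ({i} : Finset (Fin n))), mobiusF F w B = 0 := by
    apply Finset.sum_eq_zero
    intro B hB
    have hB2 := (Finset.mem_filter.mp hB).2
    rw [Finset.ssubset_singleton_iff] at hB2
    rw [hB2]
    exact mobiusF_empty F w hw
  rw [this, sub_zero]

lemma mobiusF_sum {n : ℕ} (F : Finset (Finset (Fin n))) (w : Finset (Fin n) → ℝ)
    {A : Finset (Fin n)} (hA : A ∈ F) :
    ∑ B ∈ F.filter (fun B => B ⊆ A), mobiusF F w B = w A := by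
  have h1 : F.filter (fun B => B ⊆ A) = insert A (F.filter (fun B => B ⊂ A)) := by
    ext B
    simp only [Finset.mem_filter, Finset.mem_insert]
    constructor
    · rintro ⟨hBF, hBA⟩
      rcases eq_or_ne B A with h | h
      · exact Or.inl h
      · exact Or.inr ⟨hBF, Finset.ssubset_iff_subset_ne.mpr ⟨hBA, h⟩⟩
    · rintro (rfl | ⟨hBF, hBA⟩)
      · exact ⟨hA, Finset.Subset.refl _⟩
      · exact ⟨hBF, hBA.subset⟩
  rw [h1, Finset.sum_insert (by simp only [Finset.mem_filter]; exact fun h => (lt_irrefl A h.2).elim)]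
  rw [mobiusF_def]
  ring

/-- for a partition `P` of `N` all of whose blocks are feasible,
a block `A ∈ P` with `|A| > 1`, `i ∈ A` and `q_i ∈ Δ̄_i`,
`W(p) − W(q_i | p_{−i}) = (1 − q_i^A) ∑_{B ∈ F_i, B ⊆ A, |B|>1} μ^w(B)
  = (1 − q_i^A)(w(A) − w({i}) − ∑_{B̂ ∈ F, B̂ ⊆ A∖{i}} μ^w(B̂))`. -/
theorem deviation_from_partition_F {n : ℕ} (F : Finset (Finset (Fin n)))
    (hF0 : (∅ : Finset (Fin n)) ∈ F) (hFs : ∀ i : Fin n, {i} ∈ F)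
    (w : Finset (Fin n) → ℝ) (hw0 : ∀ A ∈ F, 0 ≤ w A) (hw : w ∅ = 0)
    (P : Finpartition (Finset.univ : Finset (Fin n))) (hP : ∀ A ∈ P.parts, A ∈ F)
    (A : Finset (Fin n)) (hA : A ∈ P.parts) (hcard : 1 < A.card)
    (i : Fin n) (hi : i ∈ A) (qi : Finset (Fin n) → ℝ) (hqi : coordDistF F i qi) :
    WF F w (partPointF P) - WF F w (Function.update (partPointF P) i qi) =
      (1 - qi A) *
        ∑ B ∈ F.filter (fun B => i ∈ B ∧ B ⊆ A ∧ 1 < B.card), mobiusF F w B ∧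
    WF F w (partPointF P) - WF F w (Function.update (partPointF P) i qi) =
      (1 - qi A) *
        (w A - w {i} - ∑ B ∈ F.filter (fun B => B ⊆ A.erase i), mobiusF F w B) := by
  obtain ⟨hq0, hqz, hq1⟩ := hqi
  have hAF : A ∈ F := hP A hA
  set p := partPointF P with hp
  set q' := Function.update (partPointF P) i qi with hq'def
  -- basic facts about p and q'
  have hpval : ∀ j C, p j C = if C ∈ P.parts ∧ j ∈ C then 1 else 0 := fun j C => rfl
  have hq'i : ∀ C, q' i C = qi C := fun C => by rw [hq'def, Function.update_self]
  have hq'ne : ∀ j, j ≠ i → q' j = p j := fun j hj => by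
    rw [hq'def, Function.update_of_ne hj]
  -- product lemmas
  have hprod_p_one : ∀ (C B : Finset (Fin n)), C ∈ P.parts → B ⊆ C →
      (∏ j ∈ B, p j C) = 1 := by
    intro C B hC hBC
    apply Finset.prod_eq_one
    intro j hj
    rw [hpval]
    exact if_pos ⟨hC, hBC hj⟩
  have hprod_p_zero : ∀ (C B : Finset (Fin n)), C ∉ P.parts → B.Nonempty →
      (∏ j ∈ B, p j C) = 0 := by
    intro C B hC ⟨j, hj⟩
    apply Finset.prod_eq_zero hj
    rw [hpval]
    exact if_neg (fun h => hC h.1)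
  have hprod_q' : ∀ (C B : Finset (Fin n)), i ∈ B →
      (∏ j ∈ B, q' j C) = qi C * ∏ j ∈ B.erase i, p j C := by
    intro C B hiB
    rw [← Finset.mul_prod_erase B _ hiB, hq'i]
    congr 1
    apply Finset.prod_congr rfl
    intro j hj
    rw [hq'ne j (Finset.ne_of_mem_erase hj)]
  -- qi vanishes off i
  have hqz' : ∀ C, i ∉ C → qi C = 0 := fun C hC => hqz C (Or.inl hC)
  -- uniqueness of part containing i
  have huniq : ∀ C ∈ P.parts, i ∈ C → C = A := fun C hC hiC =>
    P.eq_of_mem_parts hC hA hiC hi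
  -- the difference as a double sum
  have hdiff : WF F w p - WF F w q' =
      ∑ C ∈ F, ∑ B ∈ F.filter (fun B => B ⊆ C),
        ((∏ j ∈ B, p j C) - (∏ j ∈ B, q' j C)) * mobiusF F w B := by
    unfold WF
    rw [← Finset.sum_sub_distrib]
    exact Finset.sum_congr rfl fun C _ => by
      rw [← Finset.sum_sub_distrib]
      exact Finset.sum_congr rfl fun B _ => by ring
  -- evaluate inner sums
  have hinner : ∀ C ∈ F,
      ∑ B ∈ F.filter (fun B => B ⊆ C),
        ((∏ j ∈ B, p j C) - (∏ j ∈ B, q' j C)) * mobiusF F w B =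
      if C ∈ P.parts then
        (1 - qi C) * ∑ B ∈ F.filter (fun B => i ∈ B ∧ B ⊆ C), mobiusF F w B
      else -(qi C * w {i}) := by
    intro C hC
    -- restrict to B containing i
    have hrestrict : ∑ B ∈ F.filter (fun B => B ⊆ C),
        ((∏ j ∈ B, p j C) - (∏ j ∈ B, q' j C)) * mobiusF F w B =
        ∑ B ∈ F.filter (fun B => i ∈ B ∧ B ⊆ C),
        ((∏ j ∈ B, p j C) - (∏ j ∈ B, q' j C)) * mobiusF F w B := by
      symm
      apply Finset.sum_subset
      · intro B hB
        simp only [Finset.mem_filter] at hB ⊢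
        exact ⟨hB.1, hB.2.2⟩
      · intro B hB hB'
        simp only [Finset.mem_filter] at hB hB'
        have hiB : i ∉ B := fun h => hB' ⟨hB.1, h, hB.2⟩
        have : (∏ j ∈ B, q' j C) = ∏ j ∈ B, p j C := by
          apply Finset.prod_congr rfl
          intro j hj
          rw [hq'ne j (fun h => hiB (h ▸ hj))]
        rw [this, sub_self, zero_mul]
    rw [hrestrict]
    by_cases hCp : C ∈ P.parts
    · rw [if_pos hCp, Finset.mul_sum]
      apply Finset.sum_congr rfl
      intro B hB
      simp only [Finset.mem_filter] at hB
      obtain ⟨hBF, hiB, hBC⟩ := hB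
      rw [hprod_p_one C B hCp hBC, hprod_q' C B hiB,
        hprod_p_one C (B.erase i) hCp ((Finset.erase_subset i B).trans hBC), mul_one]
    · rw [if_neg hCp]
      by_cases hiC : i ∈ C
      · rw [Finset.sum_eq_single_of_mem ({i} : Finset (Fin n))
            (Finset.mem_filter.mpr
              ⟨hFs i, Finset.mem_singleton_self i, Finset.singleton_subset_iff.mpr hiC⟩)
            ?_]
        · rw [hprod_p_zero C {i} hCp ⟨i, Finset.mem_singleton_self i⟩,
            hprod_q' C {i} (Finset.mem_singleton_self i), Finset.erase_singleton,
            Finset.prod_empty, mul_one, mobiusF_singleton F w hw]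
          ring
        · intro B hB hBne
          simp only [Finset.mem_filter] at hB
          obtain ⟨hBF, hiB, hBC⟩ := hB
          have hBe : (B.erase i).Nonempty := by
            rcases Finset.eq_singleton_or_nontrivial hiB with h | h
            · exact absurd h hBne
            · obtain ⟨j, hj, hji⟩ := h.exists_ne i
              exact ⟨j, Finset.mem_erase.mpr ⟨hji, hj⟩⟩
          rw [hprod_p_zero C B hCp ⟨i, hiB⟩, hprod_q' C B hiB,
            hprod_p_zero C (B.erase i) hCp hBe, mul_zero, sub_self, zero_mul]
      · have hempty : F.filter (fun B => i ∈ B ∧ B ⊆ C) = ∅ := by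
          apply Finset.filter_eq_empty_iff.mpr
          intro B _
          rintro ⟨hiB, hBC⟩
          exact hiC (hBC hiB)
        rw [hempty, Finset.sum_empty, hqz' C hiC, zero_mul, neg_zero]
  -- main sum computation
  set T := ∑ B ∈ F.filter (fun B => i ∈ B ∧ B ⊆ A), mobiusF F w B with hT
  have hsumF : ∑ x ∈ F, qi x = 1 := by
    rw [← Finset.sum_subset (Finset.filter_subset (fun x => i ∈ x) F)
      (fun x hx hnx => hqz' x (fun hix => hnx (Finset.mem_filter.mpr ⟨hx, hix⟩)))]
    exact hq1
  have hsump : ∑ x ∈ F.filter (fun x => x ∈ P.parts), qi x = qi A := by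
    rw [Finset.sum_eq_single_of_mem A (Finset.mem_filter.mpr ⟨hAF, hA⟩)]
    intro x hx hxA
    simp only [Finset.mem_filter] at hx
    exact hqz' x (fun hix => hxA (huniq x hx.2 hix))
  have hsumnp : ∑ x ∈ F.filter (fun x => x ∉ P.parts), qi x = 1 - qi A := by
    have h := Finset.sum_filter_add_sum_filter_not F (fun x => x ∈ P.parts) qi
    rw [hsump, hsumF] at h
    linarith
  have hS1 : ∑ x ∈ F.filter (fun x => x ∈ P.parts),
      ((1 - qi x) * ∑ B ∈ F.filter (fun B => i ∈ B ∧ B ⊆ x), mobiusF F w B) =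
      (1 - qi A) * T := by
    rw [Finset.sum_eq_single_of_mem A (Finset.mem_filter.mpr ⟨hAF, hA⟩)]
    intro x hx hxA
    simp only [Finset.mem_filter] at hx
    have hemp : F.filter (fun B => i ∈ B ∧ B ⊆ x) = ∅ := by
      apply Finset.filter_eq_empty_iff.mpr
      rintro B _ ⟨hiB, hBx⟩
      exact hxA (huniq x hx.2 (hBx hiB))
    rw [hemp, Finset.sum_empty, mul_zero]
  have hS2 : ∑ x ∈ F.filter (fun x => x ∉ P.parts), -(qi x * w {i}) =
      -((1 - qi A) * w {i}) := by
    simp only [← neg_mul]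
    rw [← Finset.sum_mul, Finset.sum_neg_distrib, hsumnp]
  have hmain : WF F w p - WF F w q' = (1 - qi A) * (T - w {i}) := by
    rw [hdiff, Finset.sum_congr rfl hinner, Finset.sum_ite, hS1, hS2]
    ring
  have hTsplit : T = (∑ B ∈ F.filter (fun B => i ∈ B ∧ B ⊆ A ∧ 1 < B.card),
      mobiusF F w B) + w {i} := by
    have h1 : F.filter (fun B => i ∈ B ∧ B ⊆ A) =
        insert {i} (F.filter (fun B => i ∈ B ∧ B ⊆ A ∧ 1 < B.card)) := by
      ext B
      simp only [Finset.mem_filter, Finset.mem_insert]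
      constructor
      · rintro ⟨hBF, hiB, hBA⟩
        rcases Finset.eq_singleton_or_nontrivial hiB with h | h
        · exact Or.inl h
        · exact Or.inr ⟨hBF, hiB, hBA, Finset.one_lt_card_iff_nontrivial.mpr h⟩
      · rintro (rfl | ⟨hBF, hiB, hBA, _⟩)
        · exact ⟨hFs i, Finset.mem_singleton_self i, Finset.singleton_subset_iff.mpr hi⟩
        · exact ⟨hBF, hiB, hBA⟩
    rw [hT, h1, Finset.sum_insert (by
      simp only [Finset.mem_filter, Finset.card_singleton]
      rintro ⟨-, -, -, h⟩
      exact lt_irrefl 1 h), mobiusF_singleton F w hw]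
    ring
  have hT2 : T = w A - ∑ B ∈ F.filter (fun B => B ⊆ A.erase i), mobiusF F w B := by
    have hsplit := Finset.sum_filter_add_sum_filter_not (F.filter (fun B => B ⊆ A))
      (fun B => i ∈ B) (mobiusF F w)
    rw [Finset.filter_filter, Finset.filter_filter, mobiusF_sum F w hAF] at hsplit
    have e1 : F.filter (fun B => B ⊆ A ∧ i ∈ B) = F.filter (fun B => i ∈ B ∧ B ⊆ A) := by
      apply Finset.filter_congr
      intro B _
      constructor <;> exact fun h => ⟨h.2, h.1⟩
    have e2 : F.filter (fun B => B ⊆ A ∧ i ∉ B) = F.filter (fun B => B ⊆ A.erase i) := by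
      apply Finset.filter_congr
      intro B _
      rw [Finset.subset_erase]
    rw [e1, e2, ← hT] at hsplit
    linarith
  constructor
  · rw [hmain, hTsplit]; ring
  · rw [hmain, hT2]; ring
end

section
/- In the lower-dimensional setting, let P be any partition of N all of whose blocks belong to F, with associated p ∈ Δ̄_N. If w(A) ≥ w({i}) + ∑_{B̂ ∈ F, B̂ ⊆ A∖{i}} μ^w(B̂) for every block A ∈ P and every i ∈ A, then p is a local maximizer of W, i.e., W(p) ≥ W(q_i | p_{−i}) for every i ∈ N and every q_i ∈ Δ̄_i. -/
open Finset

/-- if every block `A ∈ P` and every `i ∈ A` satisfy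
`w(A) ≥ w({i}) + ∑_{B̂ ∈ F, B̂ ⊆ A∖{i}} μ^w(B̂)`, then the point `p` associated
to `P` (a partition all of whose blocks are feasible) is a local maximizer. -/
theorem partition_local_maximizer_F {n : ℕ} (F : Finset (Finset (Fin n)))
    (hF0 : (∅ : Finset (Fin n)) ∈ F) (hFs : ∀ i : Fin n, {i} ∈ F)
    (w : Finset (Fin n) → ℝ) (hw0 : ∀ A ∈ F, 0 ≤ w A) (hw : w ∅ = 0)
    (P : Finpartition (Finset.univ : Finset (Fin n))) (hP : ∀ A ∈ P.parts, A ∈ F)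
    (h : ∀ A ∈ P.parts, ∀ i ∈ A,
      w {i} + ∑ B ∈ F.filter (fun B => B ⊆ A.erase i), mobiusF F w B ≤ w A) :
    ∀ i : Fin n, ∀ qi : Finset (Fin n) → ℝ, coordDistF F i qi →
      WF F w (Function.update (partPointF P) i qi) ≤ WF F w (partPointF P) := by
  intro i qi hqi
  obtain ⟨hq0, hqsupp, hqsum⟩ := hqi
  obtain ⟨A₀, hA₀P, hiA₀⟩ := P.exists_mem (Finset.mem_univ i)
  have hA₀F : A₀ ∈ F := hP A₀ hA₀P
  set p := partPointF P with hp
  set f : Finset (Fin n) → ℝ := fun A =>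
    ∑ B ∈ F.filter (fun B => B ⊆ A ∧ i ∈ B),
      (∏ j ∈ B.erase i, p j A) * mobiusF F w B with hf
  set C : ℝ := ∑ A ∈ F, ∑ B ∈ F.filter (fun B => B ⊆ A ∧ i ∉ B),
      (∏ j ∈ B, p j A) * mobiusF F w B with hC
  -- splitting lemma
  have hsplit : ∀ (A : Finset (Fin n)) (g : Finset (Fin n) → ℝ),
      ∑ B ∈ F.filter (fun B => B ⊆ A), g B =
        ∑ B ∈ F.filter (fun B => B ⊆ A ∧ i ∈ B), g B +
          ∑ B ∈ F.filter (fun B => B ⊆ A ∧ i ∉ B), g B := by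
    intro A g
    rw [← Finset.sum_filter_add_sum_filter_not (F.filter (fun B => B ⊆ A))
      (fun B => i ∈ B) g, Finset.filter_filter, Finset.filter_filter]
  have key : ∀ r : Fin n → Finset (Fin n) → ℝ, (∀ j, j ≠ i → r j = p j) →
      WF F w r = C + ∑ A ∈ F, r i A * f A := by
    intro r hr
    rw [WF, hC, ← Finset.sum_add_distrib]
    apply Finset.sum_congr rfl
    intro A _
    rw [hsplit A (fun B => (∏ j ∈ B, r j A) * mobiusF F w B)]
    rw [add_comm]
    congr 1
    · apply Finset.sum_congr rfl
      intro B hB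
      have hiB := (Finset.mem_filter.mp hB).2.2
      congr 1
      apply Finset.prod_congr rfl
      intro j hj
      exact congrFun (hr j (fun hji => hiB (hji ▸ hj))) A
    · rw [Finset.mul_sum]
      apply Finset.sum_congr rfl
      intro B hB
      have hiB := (Finset.mem_filter.mp hB).2.2
      rw [← Finset.mul_prod_erase B (fun j => r j A) hiB, mul_assoc]
      congr 1
      congr 1
      apply Finset.prod_congr rfl
      intro j hj
      rw [hr j (Finset.ne_of_mem_erase hj)]
  have hq' : WF F w (Function.update p i qi) = C + ∑ A ∈ F, qi A * f A := by
    rw [key (Function.update p i qi) (fun j hj => Function.update_of_ne hj _ _)]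
    simp only [Function.update_self]
  have hp' : WF F w p = C + ∑ A ∈ F, p i A * f A := by
    exact key p (fun _ _ => rfl)
  -- p i concentrates on A₀
  have hpick : ∑ A ∈ F, p i A * f A = f A₀ := by
    rw [Finset.sum_eq_single_of_mem A₀ hA₀F]
    · have : p i A₀ = 1 := by
        simp [hp, partPointF, hA₀P, hiA₀]
      rw [this, one_mul]
    · intro A hA hne
      have : p i A = 0 := by
        simp only [hp, partPointF, ite_eq_right_iff, one_ne_zero]
        rintro ⟨hAP, hiA⟩
        exact absurd (P.eq_of_mem_parts hAP hA₀P hiA hiA₀) hne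
      rw [this, zero_mul]
  -- value of f at A₀
  have hmobdef : ∀ A : Finset (Fin n), mobiusF F w A =
      w A - ∑ B ∈ F.filter (fun B => B ⊂ A), mobiusF F w B := by
    intro A
    rw [mobiusF, Finset.sum_attach]
  have hsum_mob : ∀ A ∈ F, ∑ B ∈ F.filter (fun B => B ⊆ A), mobiusF F w B = w A := by
    intro A hA
    have hset : F.filter (fun B => B ⊆ A) = insert A (F.filter (fun B => B ⊂ A)) := by
      ext B
      simp only [Finset.mem_filter, Finset.mem_insert]
      constructor
      · rintro ⟨hBF, hBA⟩
        rcases eq_or_ne B A with rfl | hne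
        · exact Or.inl rfl
        · exact Or.inr ⟨hBF, hBA.ssubset_of_ne hne⟩
      · rintro (rfl | ⟨hBF, hBA⟩)
        · exact ⟨hA, subset_rfl⟩
        · exact ⟨hBF, hBA.subset⟩
    rw [hset, Finset.sum_insert (by intro hmem; exact (Finset.mem_filter.mp hmem).2.ne rfl)]
    rw [hmobdef A]
    ring
  have hmob_empty : mobiusF F w ∅ = 0 := by
    rw [hmobdef]
    have : F.filter (fun B => B ⊂ (∅ : Finset (Fin n))) = ∅ := by
      apply Finset.filter_false_of_mem
      intro B _ hB
      exact absurd hB (by simp)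
    rw [this, Finset.sum_empty, hw, sub_zero]
  have hmob_single : mobiusF F w {i} = w {i} := by
    rw [hmobdef]
    have : F.filter (fun B => B ⊂ ({i} : Finset (Fin n))) = {∅} := by
      ext B
      simp only [Finset.mem_filter, Finset.mem_singleton, Finset.ssubset_singleton_iff]
      constructor
      · rintro ⟨_, rfl⟩; rfl
      · rintro rfl; exact ⟨hF0, rfl⟩
    rw [this, Finset.sum_singleton, hmob_empty, sub_zero]
  have hfA₀ : f A₀ = w A₀ - ∑ B ∈ F.filter (fun B => B ⊆ A₀.erase i), mobiusF F w B := by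
    have h1 : f A₀ = ∑ B ∈ F.filter (fun B => B ⊆ A₀ ∧ i ∈ B), mobiusF F w B := by
      simp only [hf]
      apply Finset.sum_congr rfl
      intro B hB
      have hBF := (Finset.mem_filter.mp hB).1
      have hBA := (Finset.mem_filter.mp hB).2.1
      have hiB := (Finset.mem_filter.mp hB).2.2
      have : ∏ j ∈ B.erase i, p j A₀ = 1 := by
        apply Finset.prod_eq_one
        intro j hj
        have hjA₀ : j ∈ A₀ := hBA (Finset.mem_of_mem_erase hj)
        simp [hp, partPointF, hA₀P, hjA₀]
      rw [this, one_mul]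
    have h2 : F.filter (fun B => B ⊆ A₀ ∧ i ∉ B) = F.filter (fun B => B ⊆ A₀.erase i) := by
      apply Finset.filter_congr
      intro B _
      simp [Finset.subset_erase, and_comm]
    have h3 := hsplit A₀ (mobiusF F w)
    rw [hsum_mob A₀ hA₀F, h2] at h3
    rw [h1]
    linarith
  -- value of f at other A containing i
  have hfother : ∀ A ∈ F, i ∈ A → A ≠ A₀ → f A = w {i} := by
    intro A hAF hiA hne
    have hAnP : A ∉ P.parts := by
      intro hAP
      exact hne (P.eq_of_mem_parts hAP hA₀P hiA hiA₀)
    have hmem : ({i} : Finset (Fin n)) ∈ F.filter (fun B => B ⊆ A ∧ i ∈ B) := by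
      simp [hFs i, hiA]
    simp only [hf]
    rw [Finset.sum_eq_single_of_mem {i} hmem]
    · simp [hmob_single]
    · intro B hB hBne
      have hBF := (Finset.mem_filter.mp hB).1
      have hBA := (Finset.mem_filter.mp hB).2.1
      have hiB := (Finset.mem_filter.mp hB).2.2
      have hBe : B.erase i ≠ ∅ := by
        intro hemp
        rcases (Finset.erase_eq_empty_iff B i).mp hemp with rfl | rfl
        · exact absurd hiB (by simp)
        · exact hBne rfl
      obtain ⟨j, hj⟩ := Finset.nonempty_iff_ne_empty.mpr hBe
      have : p j A = 0 := by
        simp [hp, partPointF, hAnP]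
      rw [Finset.prod_eq_zero hj this, zero_mul]
  -- f A ≤ f A₀
  have hfle : ∀ A ∈ F, i ∈ A → f A ≤ f A₀ := by
    intro A hAF hiA
    rcases eq_or_ne A A₀ with rfl | hne
    · exact le_refl _
    · rw [hfother A hAF hiA hne, hfA₀]
      have := h A₀ hA₀P i hiA₀
      linarith
  -- conclude
  rw [hq', hp', hpick]
  have step1 : ∑ A ∈ F, qi A * f A ≤ ∑ A ∈ F, qi A * f A₀ := by
    apply Finset.sum_le_sum
    intro A hAF
    by_cases hiA : i ∈ A
    · exact mul_le_mul_of_nonneg_left (hfle A hAF hiA) (hq0 A)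
    · rw [hqsupp A (Or.inl hiA), zero_mul, zero_mul]
  have step2 : ∑ A ∈ F, qi A * f A₀ = f A₀ := by
    rw [← Finset.sum_mul]
    have : ∑ A ∈ F, qi A = 1 := by
      rw [← Finset.sum_filter_add_sum_filter_not F (fun A => i ∈ A) qi, hqsum]
      have : ∑ A ∈ F.filter (fun A => ¬ i ∈ A), qi A = 0 := by
        apply Finset.sum_eq_zero
        intro A hA
        exact hqsupp A (Or.inl (Finset.mem_filter.mp hA).2)
      rw [this, add_zero]
    rw [this, one_mul]
  linarith
end
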